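/- arXiv:1111.0706 — 3 statements merged into one kernel-verified Lean document; each statement's English description precedes it below -/
import Mathlib

section
/- If G is the complete graph on n ≥ 1 vertices with root r and capacities c : V → ℕ with c_r ≥ K, then there exists a bounded rooted-tree packing (T_1, …, T_K) with ∑_{k=1}^K |V_k| = min( K + ∑_{v∈V} c_v , K·n ). -/
open Finset

/-- A rooted tree on vertex type `V` with root `r`, encoded by a vertex set and a
parent function: every non-root vertex has a parent in the tree, and iterating
the parent function reaches the root. -/
structure RTree (V : Type) [DecidableEq V] (r : V) where
  verts : Finset V
  root_mem : r ∈ verts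
  parent : V → V
  parent_mem : ∀ v ∈ verts, v ≠ r → parent v ∈ verts
  reach : ∀ v ∈ verts, ∃ n : ℕ, parent^[n] v = r

/-- Number of children of `v` in the rooted tree `T`. -/
def RTree.children {V : Type} [DecidableEq V] {r : V} (T : RTree V r) (v : V) : ℕ :=
  (T.verts.filter fun w => w ≠ r ∧ T.parent w = v).card

/-- `T` is a subtree of the graph `G`: every parent-child pair is an edge of `G`. -/
def RTree.inGraph {V : Type} [DecidableEq V] {r : V} (T : RTree V r) (G : SimpleGraph V) : Prop :=
  ∀ v ∈ T.verts, v ≠ r → G.Adj (T.parent v) v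

/-- A bounded rooted-tree packing: `K` subtrees of `G` rooted at `r`, with the total
number of children of each vertex bounded by its capacity. -/
def isPacking {V : Type} [DecidableEq V] [Fintype V] {r : V} (G : SimpleGraph V) (c : V → ℕ)
    {K : ℕ} (T : Fin K → RTree V r) : Prop :=
  (∀ k, (T k).inGraph G) ∧ ∀ v : V, (∑ k, (T k).children v) ≤ c v

/-- The set of total spanned-vertex counts achievable by bounded rooted-tree packings. -/
def packSums {V : Type} [DecidableEq V] [Fintype V] (G : SimpleGraph V) (c : V → ℕ) (r : V)
    (K : ℕ) : Set ℕ :=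
  {S | ∃ T : Fin K → RTree V r, isPacking G c T ∧ S = ∑ k, (T k).verts.card}

namespace CGP

/-- A filter of `range N` by a downward-closed predicate is an initial segment. -/
lemma filter_range_eq_range {N : ℕ} {p : ℕ → Prop} [DecidablePred p]
    (hp : ∀ i j : ℕ, i ≤ j → p j → p i) :
    (range N).filter p = range (((range N).filter p).card) := by
  ext x
  simp only [mem_filter, mem_range]
  constructor
  · rintro ⟨hx, hpx⟩
    have hsub : range (x + 1) ⊆ (range N).filter p := by
      intro y hy
      rw [mem_range] at hy
      exact mem_filter.2 ⟨mem_range.2 (lt_of_le_of_lt (Nat.lt_succ_iff.1 hy) hx),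
        hp y x (Nat.lt_succ_iff.1 hy) hpx⟩
    have := card_le_card hsub
    rw [card_range] at this
    omega
  · intro hx
    by_contra h
    push_neg at h
    rcases lt_or_ge x N with hxN | hxN
    · have hnpx : ¬ p x := h hxN
      have hsub : (range N).filter p ⊆ range x := by
        intro y hy
        rw [mem_filter] at hy
        rw [mem_range]
        by_contra hyx
        exact hnpx (hp x y (le_of_not_gt hyx) hy.2)
      have := card_le_card hsub
      rw [card_range] at this
      omega
    · have : (range N).filter p ⊆ range N := filter_subset _ _
      have := card_le_card this
      rw [card_range] at this
      omega

lemma sum_count {K n' M : ℕ} (hK : 0 < K) (hM : M ≤ K * n')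
    (p : ℕ → Prop) [DecidablePred p] :
    ∑ k : Fin K, ((range n').filter fun i => i * K + (k : ℕ) < M ∧ p (i * K + (k : ℕ))).card
      = ((range M).filter p).card := by
  have hfib : ∀ s ∈ (range M).filter p, (⟨s % K, Nat.mod_lt s hK⟩ : Fin K) ∈ (univ : Finset (Fin K)) :=
    fun _ _ => mem_univ _
  rw [Finset.card_eq_sum_card_fiberwise hfib]
  refine Finset.sum_congr rfl fun k _ => ?_
  refine Finset.card_nbij (fun i => i * K + (k : ℕ)) ?_ ?_ ?_
  · intro i hi
    simp only [mem_coe, mem_filter, mem_range] at hi ⊢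
    refine ⟨⟨hi.2.1, hi.2.2⟩, ?_⟩
    apply Fin.ext
    show (i * K + (k:ℕ)) % K = (k:ℕ)
    rw [Nat.mul_comm, Nat.mul_add_mod]
    exact Nat.mod_eq_of_lt k.isLt
  · intro a _ b _ hab
    simp only at hab
    have := Nat.add_right_cancel hab
    exact Nat.eq_of_mul_eq_mul_right hK this
  · intro s hs
    simp only [coe_filter, mem_filter, mem_range, Set.mem_setOf_eq] at hs
    obtain ⟨⟨hsM, hps⟩, hmod⟩ := hs
    have hmod' : s % K = (k : ℕ) := by
      have := congrArg Fin.val hmod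
      simpa using this
    have h1 : s / K * K + (k : ℕ) = s := by
      rw [← hmod', Nat.mul_comm]
      exact Nat.div_add_mod s K
    refine ⟨s / K, ?_, h1⟩
    simp only [coe_filter, mem_range, Set.mem_setOf_eq, mem_coe, mem_filter]
    have hdiv : s / K < n' := Nat.div_lt_of_lt_mul (by omega)
    rw [h1]
    exact ⟨hdiv, hsM, hps⟩


section IdxL

variable (K n : ℕ) (cc : ℕ → ℕ)

/-- Cumulative capacities. -/
def C (j : ℕ) : ℕ := ∑ t ∈ range j, cc t

lemma C_mono : Monotone (C cc) := fun a b hab =>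
  Finset.sum_le_sum_of_subset (range_subset_range.2 hab)

lemma C_succ (j : ℕ) : C cc (j + 1) = C cc j + cc j := sum_range_succ cc j

/-- Total edge count. -/
def M : ℕ := min (C cc n) (K * (n - 1))

/-- Owner of slot `s`. -/
def idx (s : ℕ) : ℕ := Nat.find (⟨n, Or.inr le_rfl⟩ : ∃ j, s < C cc (j + 1) ∨ n ≤ j)

variable {K n cc}

lemma idx_lt (hn : 0 < n) {s : ℕ} (hs : s < C cc n) : idx n cc s < n := by
  have e : n - 1 + 1 = n := by omega
  have h : s < C cc ((n - 1) + 1) ∨ n ≤ n - 1 := Or.inl (by rwa [e])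
  have h2 : idx n cc s ≤ n - 1 := Nat.find_le h
  omega

lemma idx_spec2 (hn : 0 < n) {s : ℕ} (hs : s < C cc n) : s < C cc (idx n cc s + 1) := by
  have := Nat.find_spec (⟨n, Or.inr le_rfl⟩ : ∃ j, s < C cc (j + 1) ∨ n ≤ j)
  rcases this with h | h
  · exact h
  · exact absurd (idx_lt hn hs) (not_lt.2 h)

lemma idx_spec1 {s : ℕ} : C cc (idx n cc s) ≤ s := by
  rcases Nat.eq_zero_or_pos (idx n cc s) with h | h
  · rw [h]; exact Nat.zero_le s |>.trans_eq' (by simp [C])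
  · have hfind : idx n cc s = Nat.find (⟨n, Or.inr le_rfl⟩ : ∃ j, s < C cc (j + 1) ∨ n ≤ j) := rfl
    have hmin := Nat.find_min (⟨n, Or.inr le_rfl⟩ : ∃ j, s < C cc (j + 1) ∨ n ≤ j)
      (m := idx n cc s - 1) (by rw [← hfind]; omega)
    push_neg at hmin
    have h1 := hmin.1
    have e : idx n cc s - 1 + 1 = idx n cc s := by omega
    rwa [e] at h1

lemma idx_mono {s s' : ℕ} (h : s ≤ s') : idx n cc s ≤ idx n cc s' := by
  apply Nat.find_le
  have := Nat.find_spec (⟨n, Or.inr le_rfl⟩ : ∃ j, s' < C cc (j + 1) ∨ n ≤ j)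
  rcases this with h' | h'
  · exact Or.inl (lt_of_le_of_lt h h')
  · exact Or.inr h'

lemma idx_eq_zero {s : ℕ} (hs : s < cc 0) : idx n cc s = 0 := by
  rw [idx, Nat.find_eq_zero]
  exact Or.inl (by simpa [C_succ, C] using hs)

/-- count of slots below `M` owned by `j` is at most `cc j`. -/
lemma count_idx_le (hn : 0 < n) (j : ℕ) :
    ((range (M K n cc)).filter fun s => idx n cc s = j).card ≤ cc j := by
  have hsub : ((range (M K n cc)).filter fun s => idx n cc s = j) ⊆ Ico (C cc j) (C cc (j + 1)) := by
    intro s hs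
    rw [mem_filter, mem_range] at hs
    obtain ⟨hsM, hidx⟩ := hs
    have hsC : s < C cc n := lt_of_lt_of_le hsM (min_le_left _ _)
    rw [mem_Ico, ← hidx]
    exact ⟨idx_spec1, idx_spec2 hn hsC⟩
  have := card_le_card hsub
  rwa [Nat.card_Ico, C_succ, Nat.add_sub_cancel_left] at this

variable (K n cc) in
/-- Number of non-root vertices of tree `k`. -/
def L (k : ℕ) : ℕ := ((range (n - 1)).filter fun i => i * K + k < M K n cc).card

lemma slot_lt_M {k i : ℕ} (hi : i < L K n cc k) : i * K + k < M K n cc := by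
  have hdc : ∀ a b : ℕ, a ≤ b → b * K + k < M K n cc → a * K + k < M K n cc := by
    intro a b hab h
    have : a * K ≤ b * K := Nat.mul_le_mul_right K hab
    omega
  have hchar := filter_range_eq_range (N := n - 1) (p := fun i => i * K + k < M K n cc) hdc
  have : i ∈ (range (n - 1)).filter fun i => i * K + k < M K n cc := by
    rw [hchar]; exact mem_range.2 hi
  exact (mem_filter.1 this).2

lemma lt_L_iff (hK : 0 < K) {k : ℕ} {i : ℕ} :
    i < L K n cc k ↔ i * K + k < M K n cc := by
  have hdc : ∀ a b : ℕ, a ≤ b → b * K + k < M K n cc → a * K + k < M K n cc := by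
    intro a b hab h
    have : a * K ≤ b * K := Nat.mul_le_mul_right K hab
    omega
  have hchar := filter_range_eq_range (N := n - 1) (p := fun i => i * K + k < M K n cc) hdc
  constructor
  · exact slot_lt_M
  · intro hi
    have hin : i < n - 1 := by
      have hM : M K n cc ≤ K * (n - 1) := min_le_right _ _
      have : i * K < K * (n - 1) := by omega
      rw [Nat.mul_comm] at this
      exact Nat.lt_of_mul_lt_mul_left this
    have : i ∈ (range (n - 1)).filter fun i => i * K + k < M K n cc :=
      mem_filter.2 ⟨mem_range.2 hin, hi⟩
    rw [hchar] at this
    exact mem_range.1 this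

lemma L_le (k : ℕ) : L K n cc k ≤ n - 1 := by
  have := card_le_card (filter_subset (fun i => i * K + k < M K n cc) (range (n - 1)))
  rwa [card_range] at this

end IdxL
section Seq

variable (K n : ℕ) (cc : ℕ → ℕ) (k : ℕ)

/-- Owner indices of the slots of tree `k`. -/
def O : Finset ℕ := (range (L K n cc k)).image fun i => idx n cc (i * K + k)

/-- Complement of `O` in `range n`. -/
def Oc : Finset ℕ := (range n) \ O K n cc k

/-- The vertex (index) at position `t` in tree `k`. -/
def seqF (t : ℕ) : ℕ :=
  if h : t < (O K n cc k).card then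
    ((O K n cc k).orderIsoOfFin rfl ⟨t, h⟩ : ℕ)
  else if h2 : t - (O K n cc k).card < (Oc K n cc k).card then
    ((Oc K n cc k).orderIsoOfFin rfl ⟨t - (O K n cc k).card, h2⟩ : ℕ)
  else 0

/-- The position of vertex (index) `j` in tree `k`. -/
def posF (j : ℕ) : ℕ :=
  if h : j ∈ O K n cc k then
    (((O K n cc k).orderIsoOfFin rfl).symm ⟨j, h⟩ : ℕ)
  else if h2 : j ∈ Oc K n cc k then
    (O K n cc k).card + ((((Oc K n cc k)).orderIsoOfFin rfl).symm ⟨j, h2⟩ : ℕ)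
  else 0

variable {K n cc k}

lemma mem_O {j : ℕ} : j ∈ O K n cc k ↔ ∃ i, i < L K n cc k ∧ idx n cc (i * K + k) = j := by
  unfold O
  rw [mem_image]
  constructor
  · rintro ⟨i, hi, he⟩; exact ⟨i, mem_range.1 hi, he⟩
  · rintro ⟨i, hi, he⟩; exact ⟨i, mem_range.2 hi, he⟩

lemma mem_Oc {j : ℕ} : j ∈ Oc K n cc k ↔ j < n ∧ j ∉ O K n cc k := by
  unfold Oc
  rw [mem_sdiff, mem_range]

lemma orderIso_min {s : Finset ℕ} (h0 : 0 ∈ s) (hc : 0 < s.card) :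
    ((s.orderIsoOfFin rfl) ⟨0, hc⟩ : ℕ) = 0 := by
  have h2 : (⟨0, hc⟩ : Fin s.card) ≤ (s.orderIsoOfFin rfl).symm ⟨0, h0⟩ := by
    rw [Fin.le_def]; exact Nat.zero_le _
  have h3 := (s.orderIsoOfFin rfl).monotone h2
  rw [OrderIso.apply_symm_apply] at h3
  exact Nat.le_zero.1 (Subtype.coe_le_coe.2 h3)

lemma O_subset (hn : 0 < n) : O K n cc k ⊆ range n := by
  intro j hj
  rw [mem_O] at hj
  obtain ⟨i, hi, rfl⟩ := hj
  rw [mem_range]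
  exact idx_lt hn (lt_of_lt_of_le (slot_lt_M hi) (min_le_left _ _))

lemma O_card_le : (O K n cc k).card ≤ L K n cc k := by
  have := Finset.card_image_le (s := range (L K n cc k)) (f := fun i => idx n cc (i * K + k))
  rwa [card_range] at this

lemma Oc_card (hn : 0 < n) : (Oc K n cc k).card = n - (O K n cc k).card := by
  rw [Oc, card_sdiff_of_subset (O_subset hn), card_range]

lemma pos_seq (hn : 0 < n) {t : ℕ} (ht : t < n) : posF K n cc k (seqF K n cc k t) = t := by
  rw [seqF]
  split_ifs with h h2
  · rw [posF]
    have hmem : ((O K n cc k).orderIsoOfFin rfl ⟨t, h⟩ : ℕ) ∈ O K n cc k :=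
      ((O K n cc k).orderIsoOfFin rfl ⟨t, h⟩).2
    rw [dif_pos hmem]
    have : (⟨((O K n cc k).orderIsoOfFin rfl ⟨t, h⟩ : ℕ), hmem⟩ : {x // x ∈ O K n cc k})
        = (O K n cc k).orderIsoOfFin rfl ⟨t, h⟩ := Subtype.ext rfl
    rw [this, OrderIso.symm_apply_apply]
  · rw [posF]
    have hmem : ((Oc K n cc k).orderIsoOfFin rfl ⟨t - (O K n cc k).card, h2⟩ : ℕ) ∈ Oc K n cc k :=
      ((Oc K n cc k).orderIsoOfFin rfl ⟨t - (O K n cc k).card, h2⟩).2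
    have hnotin : ((Oc K n cc k).orderIsoOfFin rfl ⟨t - (O K n cc k).card, h2⟩ : ℕ) ∉ O K n cc k :=
      (mem_Oc.1 hmem).2
    rw [dif_neg hnotin, dif_pos hmem]
    have : (⟨((Oc K n cc k).orderIsoOfFin rfl ⟨t - (O K n cc k).card, h2⟩ : ℕ), hmem⟩ :
        {x // x ∈ Oc K n cc k}) = (Oc K n cc k).orderIsoOfFin rfl ⟨t - (O K n cc k).card, h2⟩ :=
      Subtype.ext rfl
    rw [this, OrderIso.symm_apply_apply]
    push_neg at h
    show (O K n cc k).card + (t - (O K n cc k).card) = t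
    omega
  · exfalso
    rw [Oc_card hn] at h2
    omega

lemma seqF_lt (hn : 0 < n) {t : ℕ} (ht : t < n) : seqF K n cc k t < n := by
  rw [seqF]
  split_ifs with h h2
  · have := ((O K n cc k).orderIsoOfFin rfl ⟨t, h⟩).2
    exact mem_range.1 (O_subset hn this)
  · have := ((Oc K n cc k).orderIsoOfFin rfl ⟨t - (O K n cc k).card, h2⟩).2
    exact (mem_Oc.1 this).1
  · exact hn

lemma seqF_mem (hn : 0 < n) {j : ℕ} (hj : j ∈ O K n cc k) :
    seqF K n cc k (posF K n cc k j) = j ∧ posF K n cc k j < (O K n cc k).card := by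
  rw [posF, dif_pos hj]
  have hlt : ((((O K n cc k)).orderIsoOfFin rfl).symm ⟨j, hj⟩ : ℕ) < (O K n cc k).card :=
    ((((O K n cc k)).orderIsoOfFin rfl).symm ⟨j, hj⟩).isLt
  refine ⟨?_, hlt⟩
  rw [seqF, dif_pos hlt]
  have : (⟨((((O K n cc k)).orderIsoOfFin rfl).symm ⟨j, hj⟩ : ℕ), hlt⟩ : Fin (O K n cc k).card)
      = (((O K n cc k)).orderIsoOfFin rfl).symm ⟨j, hj⟩ := Fin.ext rfl
  rw [this, OrderIso.apply_symm_apply]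

lemma seqF_zero (hn : 0 < n) (hK : 0 < K) (hk : k < K) (hKcc : K ≤ cc 0) :
    seqF K n cc k 0 = 0 := by
  rcases Nat.eq_zero_or_pos (O K n cc k).card with hp | hp
  · rw [seqF, dif_neg (by omega)]
    have hOe : O K n cc k = ∅ := card_eq_zero.1 hp
    have h0mem : (0 : ℕ) ∈ Oc K n cc k := by
      rw [mem_Oc, hOe]
      exact ⟨hn, notMem_empty 0⟩
    have hcd : 0 < (Oc K n cc k).card := card_pos.2 ⟨0, h0mem⟩
    have hlt : 0 - (O K n cc k).card < (Oc K n cc k).card := by omega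
    rw [dif_pos hlt]
    have he : (⟨0 - (O K n cc k).card, hlt⟩ : Fin (Oc K n cc k).card) = ⟨0, hcd⟩ :=
      Fin.ext (show 0 - (O K n cc k).card = 0 by omega)
    rw [he]
    exact orderIso_min h0mem hcd
  · have hL : 0 < L K n cc k := lt_of_lt_of_le hp O_card_le
    have h0mem : (0 : ℕ) ∈ O K n cc k := by
      rw [mem_O]
      refine ⟨0, hL, ?_⟩
      apply idx_eq_zero
      omega
    rw [seqF, dif_pos hp]
    exact orderIso_min h0mem hp

/-- Key rank bound: the position of the owner of slot `i*K+k` is at most `i`. -/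
lemma pos_owner_le (hK : 0 < K) {i : ℕ} (hi : i < L K n cc k) :
    posF K n cc k (idx n cc (i * K + k)) ≤ i := by
  have hjmem : idx n cc (i * K + k) ∈ O K n cc k := mem_O.2 ⟨i, hi, rfl⟩
  rw [posF, dif_pos hjmem]
  set σ := (O K n cc k).orderIsoOfFin rfl with hσ
  set m : Fin (O K n cc k).card := σ.symm ⟨idx n cc (i * K + k), hjmem⟩ with hm
  show (m : ℕ) ≤ i
  -- build an injection from Fin m into Fin i
  have hex : ∀ l : Fin (O K n cc k).card, ∃ i', i' < L K n cc k ∧ idx n cc (i' * K + k) = (σ l : ℕ) := by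
    intro l
    exact mem_O.1 (σ l).2
  have key : ∀ l : Fin (O K n cc k).card, (l : ℕ) < (m : ℕ) →
      Nat.find (hex l) < i := by
    intro l hl
    obtain ⟨hfl, hfe⟩ := Nat.find_spec (hex l)
    have hlt : (σ l : ℕ) < idx n cc (i * K + k) := by
      have : σ l < σ m := σ.strictMono (by exact hl)
      have h2 : σ m = ⟨idx n cc (i * K + k), hjmem⟩ := by rw [hm, OrderIso.apply_symm_apply]
      rw [h2] at this
      exact Subtype.coe_lt_coe.2 this
    by_contra hge
    push_neg at hge
    have : idx n cc (i * K + k) ≤ idx n cc (Nat.find (hex l) * K + k) := by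
      apply idx_mono
      have : i * K ≤ Nat.find (hex l) * K := Nat.mul_le_mul_right K hge
      omega
    omega
  by_contra hmi
  push_neg at hmi
  -- so i < m; injection from Fin m → Fin i
  have hinj : Function.Injective (fun l : Fin (m : ℕ) =>
      (⟨Nat.find (hex ⟨(l : ℕ), lt_trans l.isLt m.isLt⟩),
        key ⟨(l : ℕ), lt_trans l.isLt m.isLt⟩ l.isLt⟩ : Fin i)) := by
    intro a b hab
    simp only [Fin.mk.injEq] at hab
    have ha := Nat.find_spec (hex ⟨(a : ℕ), lt_trans a.isLt m.isLt⟩)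
    have hb := Nat.find_spec (hex ⟨(b : ℕ), lt_trans b.isLt m.isLt⟩)
    have : (σ ⟨(a : ℕ), lt_trans a.isLt m.isLt⟩ : ℕ) = (σ ⟨(b : ℕ), lt_trans b.isLt m.isLt⟩ : ℕ) := by
      rw [← ha.2, ← hb.2, hab]
    have h2 : σ ⟨(a : ℕ), lt_trans a.isLt m.isLt⟩ = σ ⟨(b : ℕ), lt_trans b.isLt m.isLt⟩ :=
      Subtype.ext this
    have h3 := σ.injective h2
    have h4 := congrArg Fin.val h3
    exact Fin.ext h4
  have := Fintype.card_le_of_injective _ hinj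
  simp [Fintype.card_fin] at this
  omega

end Seq
section Tree

variable {V : Type} [DecidableEq V] {n : ℕ} (e : Fin n ≃ V) (hn : 0 < n) (K : ℕ) (cc : ℕ → ℕ)

/-- Vertex with index `j`. -/
def eF (j : ℕ) : V := if h : j < n then e ⟨j, h⟩ else e ⟨0, hn⟩

variable (k : ℕ)

/-- Vertex at position `t` of tree `k`. -/
def gg (t : ℕ) : V := eF e hn (seqF K n cc k t)

/-- Vertex set of tree `k`. -/
def treeVerts : Finset V := (range (L K n cc k + 1)).image (gg e hn K cc k)

/-- Parent function of tree `k`. -/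
def treeParent (x : V) : V :=
  if _ : 1 ≤ posF K n cc k (e.symm x : ℕ) ∧ posF K n cc k (e.symm x : ℕ) ≤ L K n cc k then
    eF e hn (idx n cc ((posF K n cc k (e.symm x : ℕ) - 1) * K + k))
  else e ⟨0, hn⟩

variable {e K cc k}
variable {hn}

lemma symm_eF {j : ℕ} (hj : j < n) : ((e.symm (eF e hn j)) : ℕ) = j := by
  rw [eF, dif_pos hj, Equiv.symm_apply_apply]

lemma eF_eq_iff {j : ℕ} (hj : j < n) {v : V} : eF e hn j = v ↔ j = ((e.symm v) : ℕ) := by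
  rw [eF, dif_pos hj]
  constructor
  · rintro rfl
    rw [Equiv.symm_apply_apply]
  · intro h
    have : (⟨j, hj⟩ : Fin n) = e.symm v := Fin.ext h
    rw [this, Equiv.apply_symm_apply]

lemma L_add_one_le (hn : 0 < n) : L K n cc k + 1 ≤ n := by
  have := L_le (K := K) (n := n) (cc := cc) k
  omega

lemma pos_gg {t : ℕ} (ht : t ≤ L K n cc k) : posF K n cc k ((e.symm (gg e hn K cc k t)) : ℕ) = t := by
  have hL : L K n cc k + 1 ≤ n := L_add_one_le hn
  have htn : t < n := by omega
  rw [gg, symm_eF (seqF_lt hn htn), pos_seq hn htn]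

lemma gg_injOn {t t' : ℕ} (ht : t ≤ L K n cc k) (ht' : t' ≤ L K n cc k)
    (h : gg e hn K cc k t = gg e hn K cc k t') : t = t' := by
  have := congrArg (fun x => posF K n cc k ((e.symm x) : ℕ)) h
  simpa [pos_gg (e := e) ht, pos_gg (e := e) ht'] using this

lemma treeVerts_card : (treeVerts e hn K cc k).card = L K n cc k + 1 := by
  rw [treeVerts, card_image_of_injOn, card_range]
  intro t ht t' ht' h
  rw [mem_coe, mem_range] at ht ht'
  exact gg_injOn (by omega) (by omega) h

lemma mem_treeVerts {x : V} : x ∈ treeVerts e hn K cc k ↔ ∃ t, t ≤ L K n cc k ∧ gg e hn K cc k t = x := by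
  rw [treeVerts, mem_image]
  constructor
  · rintro ⟨t, ht, he⟩; exact ⟨t, by rw [mem_range] at ht; omega, he⟩
  · rintro ⟨t, ht, he⟩; exact ⟨t, mem_range.2 (by omega), he⟩

lemma gg_zero (hK : 0 < K) (hk : k < K) (hKcc : K ≤ cc 0) : gg e hn K cc k 0 = e ⟨0, hn⟩ := by
  rw [gg, seqF_zero hn hK hk hKcc, eF, dif_pos hn]

lemma root_mem_treeVerts (hK : 0 < K) (hk : k < K) (hKcc : K ≤ cc 0) : e ⟨0, hn⟩ ∈ treeVerts e hn K cc k :=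
  mem_treeVerts.2 ⟨0, Nat.zero_le _, gg_zero hK hk hKcc⟩

lemma pos_bounds (hK : 0 < K) (hk : k < K) (hKcc : K ≤ cc 0) {x : V} (hx : x ∈ treeVerts e hn K cc k) (hxr : x ≠ e ⟨0, hn⟩) :
    1 ≤ posF K n cc k ((e.symm x) : ℕ) ∧ posF K n cc k ((e.symm x) : ℕ) ≤ L K n cc k := by
  obtain ⟨t, ht, rfl⟩ := mem_treeVerts.1 hx
  rw [pos_gg ht]
  refine ⟨?_, ht⟩
  rcases Nat.eq_zero_or_pos t with rfl | h
  · exact absurd (gg_zero hK hk hKcc) hxr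
  · omega

lemma treeParent_eq (hK : 0 < K) (hk : k < K) (hKcc : K ≤ cc 0) {x : V} (hx : x ∈ treeVerts e hn K cc k) (hxr : x ≠ e ⟨0, hn⟩) :
    treeParent e hn K cc k x
      = eF e hn (idx n cc ((posF K n cc k ((e.symm x) : ℕ) - 1) * K + k)) := by
  rw [treeParent, dif_pos (pos_bounds hK hk hKcc hx hxr)]

lemma owner_mem_treeVerts {i : ℕ} (hi : i < L K n cc k) :
    eF e hn (idx n cc (i * K + k)) ∈ treeVerts e hn K cc k := by
  have hjO : idx n cc (i * K + k) ∈ O K n cc k := mem_O.2 ⟨i, hi, rfl⟩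
  obtain ⟨hseq, hpos⟩ := seqF_mem hn hjO
  refine mem_treeVerts.2 ⟨posF K n cc k (idx n cc (i * K + k)), ?_, ?_⟩
  · have := O_card_le (K := K) (n := n) (cc := cc) (k := k)
    omega
  · rw [gg, hseq]

lemma treeParent_mem (hK : 0 < K) (hk : k < K) (hKcc : K ≤ cc 0) {x : V} (hx : x ∈ treeVerts e hn K cc k) (hxr : x ≠ e ⟨0, hn⟩) :
    treeParent e hn K cc k x ∈ treeVerts e hn K cc k := by
  rw [treeParent_eq hK hk hKcc hx hxr]
  obtain ⟨h1, h2⟩ := pos_bounds hK hk hKcc hx hxr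
  exact owner_mem_treeVerts (by omega)

lemma treeParent_pos_lt (hK : 0 < K) (hk : k < K) (hKcc : K ≤ cc 0) {x : V} (hx : x ∈ treeVerts e hn K cc k) (hxr : x ≠ e ⟨0, hn⟩) :
    posF K n cc k ((e.symm (treeParent e hn K cc k x)) : ℕ)
      < posF K n cc k ((e.symm x) : ℕ) := by
  rw [treeParent_eq hK hk hKcc hx hxr]
  obtain ⟨h1, h2⟩ := pos_bounds hK hk hKcc hx hxr
  set t := posF K n cc k ((e.symm x) : ℕ)
  have hi : t - 1 < L K n cc k := by omega
  have hjn : idx n cc ((t - 1) * K + k) < n :=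
    idx_lt hn (lt_of_lt_of_le (slot_lt_M hi) (min_le_left _ _))
  rw [symm_eF hjn]
  have := pos_owner_le hK hi
  omega

lemma treeParent_ne (hK : 0 < K) (hk : k < K) (hKcc : K ≤ cc 0) {x : V} (hx : x ∈ treeVerts e hn K cc k) (hxr : x ≠ e ⟨0, hn⟩) :
    treeParent e hn K cc k x ≠ x := by
  intro h
  have := treeParent_pos_lt hK hk hKcc hx hxr
  rw [h] at this
  omega

lemma treeReach (hK : 0 < K) (hk : k < K) (hKcc : K ≤ cc 0) {x : V} (hx : x ∈ treeVerts e hn K cc k) :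
    ∃ m : ℕ, (treeParent e hn K cc k)^[m] x = e ⟨0, hn⟩ := by
  obtain ⟨t₀, ht₀, rfl⟩ := mem_treeVerts.1 hx
  clear hx
  have key : ∀ t : ℕ, ∀ x : V, x ∈ treeVerts e hn K cc k →
      posF K n cc k ((e.symm x) : ℕ) ≤ t →
      ∃ m : ℕ, (treeParent e hn K cc k)^[m] x = e ⟨0, hn⟩ := by
    intro t
    induction t with
    | zero =>
      intro x hx hpos
      obtain ⟨t₁, ht₁, rfl⟩ := mem_treeVerts.1 hx
      rw [pos_gg ht₁] at hpos
      have : t₁ = 0 := by omega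
      subst this
      exact ⟨0, gg_zero hK hk hKcc⟩
    | succ t ih =>
      intro x hx hpos
      by_cases hxr : x = e ⟨0, hn⟩
      · exact ⟨0, hxr⟩
      · have hmem := treeParent_mem hK hk hKcc hx hxr
        have hlt := treeParent_pos_lt hK hk hKcc hx hxr
        obtain ⟨m, hm⟩ := ih (treeParent e hn K cc k x) hmem (by omega)
        exact ⟨m + 1, by rw [Function.iterate_succ_apply]; exact hm⟩
  exact key (posF K n cc k ((e.symm (gg e hn K cc k t₀)) : ℕ)) _ (mem_treeVerts.2 ⟨t₀, ht₀, rfl⟩) le_rfl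

lemma treeChildren_eq (hK : 0 < K) (hk : k < K) (hKcc : K ≤ cc 0) (v : V) :
    ((treeVerts e hn K cc k).filter fun w => w ≠ e ⟨0, hn⟩ ∧ treeParent e hn K cc k w = v).card
      = ((range (L K n cc k)).filter fun i => idx n cc (i * K + k) = ((e.symm v) : ℕ)).card := by
  rw [treeVerts, Finset.filter_image, card_image_of_injOn]
  swap
  · intro t ht t' ht' h
    rw [mem_coe, mem_filter, mem_range] at ht ht'
    exact gg_injOn (by omega : t ≤ L K n cc k) (by omega) h
  refine Finset.card_nbij' (fun t => t - 1) (fun i => i + 1) ?_ ?_ ?_ ?_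
  · intro t ht
    dsimp only
    rw [mem_coe, mem_filter, mem_range] at ht
    obtain ⟨htL, hne, hpar⟩ := ht
    have ht1 : t ≤ L K n cc k := by omega
    have hpos1 : 1 ≤ t := by
      rcases Nat.eq_zero_or_pos t with rfl | h
      · exact absurd (gg_zero hK hk hKcc) hne
      · omega
    rw [mem_coe, mem_filter, mem_range]
    have hgmem : gg e hn K cc k t ∈ treeVerts e hn K cc k := mem_treeVerts.2 ⟨t, ht1, rfl⟩
    rw [treeParent_eq hK hk hKcc hgmem hne, pos_gg ht1] at hpar
    have hi : t - 1 < L K n cc k := by omega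
    have hjn : idx n cc ((t - 1) * K + k) < n :=
      idx_lt hn (lt_of_lt_of_le (slot_lt_M hi) (min_le_left _ _))
    rw [eF_eq_iff hjn] at hpar
    exact ⟨hi, hpar⟩
  · intro i hi
    dsimp only
    rw [mem_coe, mem_filter, mem_range] at hi
    obtain ⟨hiL, hidx⟩ := hi
    rw [mem_coe, mem_filter, mem_range]
    refine ⟨by omega, ?_, ?_⟩
    · intro h
      have := gg_injOn (by omega : i + 1 ≤ L K n cc k) (Nat.zero_le _)
        (h.trans (gg_zero hK hk hKcc).symm)
      omega
    · have hgmem : gg e hn K cc k (i + 1) ∈ treeVerts e hn K cc k :=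
        mem_treeVerts.2 ⟨i + 1, by omega, rfl⟩
      have hne : gg e hn K cc k (i + 1) ≠ e ⟨0, hn⟩ := by
        intro h
        have := gg_injOn (by omega : i + 1 ≤ L K n cc k) (Nat.zero_le _)
          (h.trans (gg_zero hK hk hKcc).symm)
        omega
      rw [treeParent_eq hK hk hKcc hgmem hne, pos_gg (by omega : i + 1 ≤ L K n cc k)]
      have hi' : i + 1 - 1 = i := by omega
      rw [hi']
      have hjn : idx n cc (i * K + k) < n :=
        idx_lt hn (lt_of_lt_of_le (slot_lt_M hiL) (min_le_left _ _))
      rw [eF_eq_iff hjn]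
      exact hidx
  · intro t ht
    dsimp only
    rw [mem_coe, mem_filter, mem_range] at ht
    obtain ⟨htL, hne, hpar⟩ := ht
    have hpos1 : 1 ≤ t := by
      rcases Nat.eq_zero_or_pos t with rfl | h
      · exact absurd (gg_zero hK hk hKcc) hne
      · omega
    omega
  · intro i _
    dsimp only
    omega

end Tree
lemma filter_L_eq {K n : ℕ} {cc : ℕ → ℕ} {k : ℕ} (hK : 0 < K)
    (q : ℕ → Prop) [DecidablePred q] :
    ((range (L K n cc k)).filter fun i => q (i * K + k))
      = (range (n - 1)).filter fun i => i * K + k < M K n cc ∧ q (i * K + k) := by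
  ext i
  simp only [mem_filter, mem_range]
  constructor
  · rintro ⟨hi, hq⟩
    have hM := slot_lt_M hi
    have hL := L_le (K := K) (n := n) (cc := cc) k
    exact ⟨by omega, hM, hq⟩
  · rintro ⟨hi, hM, hq⟩
    exact ⟨(lt_L_iff hK).2 hM, hq⟩

end CGP

set_option maxHeartbeats 1000000 in
/-- On the complete graph, if `c r ≥ K` then there is a bounded rooted-tree packing
spanning `min (K + ∑ c) (K * n)` vertices in total. -/
theorem complete_graph_optimal_packing {V : Type} [DecidableEq V] [Fintype V]
    (c : V → ℕ) (r : V) (K : ℕ) (hn : 1 ≤ Fintype.card V) (hc : K ≤ c r) :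
    ∃ T : Fin K → RTree V r, isPacking (⊤ : SimpleGraph V) c T ∧
      (∑ k, (T k).verts.card) = min (K + ∑ v, c v) (K * Fintype.card V) := by
  classical
  rcases Nat.eq_zero_or_pos K with rfl | hK
  · refine ⟨fun k => k.elim0, ⟨fun k => k.elim0, fun v => by simp⟩, ?_⟩
    simp
  set n := Fintype.card V with hnn
  have hn0 : 0 < n := hn
  -- the enumeration
  obtain ⟨e, he⟩ : ∃ e : Fin n ≃ V, e ⟨0, hn0⟩ = r := by
    let f := Fintype.equivFin V
    have hcard : Fintype.card V = n := rfl
    refine ⟨(Equiv.swap (⟨0, hn0⟩ : Fin n) (f r)).trans f.symm, ?_⟩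
    simp [Equiv.swap_apply_left]
  subst he
  set cc : ℕ → ℕ := fun j => if h : j < n then c (e ⟨j, h⟩) else 0 with hcc
  have hKcc : K ≤ cc 0 := by
    rw [hcc]
    simpa [hn0] using hc
  have hCn : CGP.C cc n = ∑ v, c v := by
    rw [CGP.C]
    rw [Finset.sum_range fun j => cc j]
    rw [← Equiv.sum_comp e c]
    apply Finset.sum_congr rfl
    intro i _
    rw [hcc]
    simp [i.isLt]
  have hM2 : CGP.M K n cc ≤ K * (n - 1) := min_le_right _ _
  refine ⟨fun k => ⟨CGP.treeVerts e hn0 K cc (k : ℕ),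
    CGP.root_mem_treeVerts hK k.isLt hKcc,
    CGP.treeParent e hn0 K cc (k : ℕ),
    fun v hv hvr => CGP.treeParent_mem hK k.isLt hKcc hv hvr,
    fun v hv => CGP.treeReach hK k.isLt hKcc hv⟩, ⟨?_, ?_⟩, ?_⟩
  · -- inGraph
    intro k v hv hvr
    rw [SimpleGraph.top_adj]
    exact CGP.treeParent_ne hK k.isLt hKcc hv hvr
  · -- capacities
    intro v
    have hstep : ∀ k : Fin K, (RTree.children
        ⟨CGP.treeVerts e hn0 K cc (k : ℕ), CGP.root_mem_treeVerts hK k.isLt hKcc,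
          CGP.treeParent e hn0 K cc (k : ℕ),
          fun w hw hwr => CGP.treeParent_mem hK k.isLt hKcc hw hwr,
          fun w hw => CGP.treeReach hK k.isLt hKcc hw⟩ v)
        = ((range (n - 1)).filter fun i => i * K + (k : ℕ) < CGP.M K n cc ∧
            CGP.idx n cc (i * K + (k : ℕ)) = ((e.symm v) : ℕ)).card := by
      intro k
      rw [RTree.children]
      rw [CGP.treeChildren_eq hK k.isLt hKcc v]
      rw [CGP.filter_L_eq hK (fun s => CGP.idx n cc s = ((e.symm v) : ℕ))]
    calc ∑ k : Fin K, _ = ∑ k : Fin K, ((range (n - 1)).filter fun i =>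
            i * K + (k : ℕ) < CGP.M K n cc ∧
            CGP.idx n cc (i * K + (k : ℕ)) = ((e.symm v) : ℕ)).card :=
          Finset.sum_congr rfl fun k _ => hstep k
      _ = ((range (CGP.M K n cc)).filter fun s =>
            CGP.idx n cc s = ((e.symm v) : ℕ)).card :=
          CGP.sum_count hK hM2 (fun s => CGP.idx n cc s = ((e.symm v) : ℕ))
      _ ≤ cc ((e.symm v) : ℕ) := CGP.count_idx_le hn0 _
      _ = c v := by
          rw [hcc]
          simp [(e.symm v).isLt]
  · -- total
    have hL : ∑ k : Fin K, CGP.L K n cc (k : ℕ) = CGP.M K n cc := by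
      have h := CGP.sum_count hK hM2 (fun _ => True)
      simp only [and_true, Finset.filter_true, card_range] at h
      rw [← h]
      apply Finset.sum_congr rfl
      intro k _
      rw [CGP.L]
    have hcards : ∀ k : Fin K, (CGP.treeVerts e hn0 K cc (k : ℕ)).card = CGP.L K n cc (k : ℕ) + 1 :=
      fun k => CGP.treeVerts_card
    calc ∑ k : Fin K, (CGP.treeVerts e hn0 K cc (k : ℕ)).card
        = ∑ k : Fin K, (CGP.L K n cc (k : ℕ) + 1) := Finset.sum_congr rfl fun k _ => hcards k
      _ = CGP.M K n cc + K := by rw [Finset.sum_add_distrib, hL]; simp [Finset.card_univ]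
      _ = min (K + ∑ v, c v) (K * n) := by
          have hb : K * (n - 1) + K = K * n := by
            have h2 : n - 1 + 1 = n := by omega
            calc K * (n - 1) + K = K * ((n - 1) + 1) := (Nat.mul_succ K (n - 1)).symm
              _ = K * n := by rw [h2]
          have hM : CGP.M K n cc = min (∑ v, c v) (K * (n - 1)) := by rw [CGP.M, hCn]
          omega
end

section
/- For the complete graph on n vertices with root r and capacities c, the maximum of ∑_{k=1}^K |V_k| over all bounded rooted-tree packings equals (K − k̄) + min( k̄ + ∑_{v∈V} c_v , k̄·n ), where k̄ = min(c_r, K). -/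
open Finset

set_option linter.unusedSectionVars false
section Aux
variable {V : Type} [DecidableEq V] [Fintype V] {r : V}

/-- trivial tree -/
def trivTree (r : V) : RTree V r where
  verts := {r}
  root_mem := mem_singleton_self r
  parent := id
  parent_mem := by intro v hv hne; simp at hv; exact absurd hv hne
  reach := by intro v hv; simp at hv; exact ⟨0, hv⟩

lemma children_of_singleton (T : RTree V r) (h : T.verts = {r}) (v : V) :
    T.children v = 0 := by
  simp [RTree.children, h, Finset.filter_singleton]

lemma trivTree_verts : (trivTree r).verts = {r} := rfl

lemma children_eq_zero_of_notMem (T : RTree V r) {v : V} (h : v ∉ T.verts) :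
    T.children v = 0 := by
  rw [RTree.children, Finset.card_eq_zero, Finset.filter_eq_empty_iff]
  rintro w hw ⟨hwr, hp⟩
  exact h (hp ▸ T.parent_mem w hw hwr)

lemma card_verts_eq (T : RTree V r) : T.verts.card = 1 + ∑ v, T.children v := by
  have hfib := Finset.card_eq_sum_card_fiberwise
    (f := T.parent) (s := T.verts.filter (· ≠ r)) (t := univ) (fun x _ => mem_univ _)
  have h2 : ∀ v, ((T.verts.filter (· ≠ r)).filter fun w => T.parent w = v) =
      T.verts.filter fun w => w ≠ r ∧ T.parent w = v := by
    intro v; rw [Finset.filter_filter]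
  have h3 : ∑ v, T.children v = (T.verts.filter (· ≠ r)).card := by
    rw [hfib]; exact Finset.sum_congr rfl fun v _ => by rw [RTree.children, ← h2 v]
  have h4 : T.verts.card = (T.verts.filter (· = r)).card + (T.verts.filter (· ≠ r)).card := by
    rw [Finset.card_filter_add_card_filter_not]
  have h5 : T.verts.filter (· = r) = {r} := by
    ext x; simp only [mem_filter, mem_singleton]
    constructor
    · rintro ⟨_, h⟩; exact h
    · rintro rfl; exact ⟨T.root_mem, rfl⟩
  rw [h3, h4, h5, card_singleton]

lemma children_root_pos (T : RTree V r) (h : 2 ≤ T.verts.card) : 1 ≤ T.children r := by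
  obtain ⟨w, hw, hwr⟩ := Finset.exists_mem_ne (s := T.verts) (by omega) r
  obtain ⟨n, hn⟩ := T.reach w hw
  have key : ∀ n : ℕ, ∀ w, w ∈ T.verts → w ≠ r → T.parent^[n] w = r → 1 ≤ T.children r := by
    intro n
    induction n with
    | zero => intro w hw hwr h; exact absurd h hwr
    | succ n ih =>
      intro w hw hwr h
      by_cases hp : T.parent w = r
      · exact Finset.card_pos.2 ⟨w, Finset.mem_filter.2 ⟨hw, hwr, hp⟩⟩
      · exact ih (T.parent w) (T.parent_mem w hw hwr) hp
          (by rwa [Function.iterate_succ_apply] at h)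
  exact key n w hw hwr hn

lemma singleTree (cc : V → ℕ) (hr : 1 ≤ cc r) :
    ∀ t : ℕ, t + 1 ≤ Fintype.card V → t ≤ ∑ v, cc v →
    ∃ T : RTree V r, T.inGraph ⊤ ∧ (∀ v, T.children v ≤ cc v) ∧ T.verts.card = t + 1 ∧
      (∑ v, T.children v) = t ∧ (∀ u, u ∉ T.verts → T.parent u = u) ∧ T.parent r = r ∧
      ((∑ v ∈ T.verts, cc v ≤ t) → ∀ w, w ∉ T.verts → cc w = 0) := by
  intro t
  induction t with
  | zero =>
    intro _ _
    refine ⟨trivTree r, ?_, ?_, ?_, ?_, ?_, rfl, ?_⟩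
    · intro v hv hne; rw [trivTree_verts, mem_singleton] at hv; exact absurd hv hne
    · intro v; rw [children_of_singleton _ trivTree_verts]; exact Nat.zero_le _
    · rfl
    · simp [children_of_singleton _ trivTree_verts]
    · intro u _; rfl
    · intro h; rw [trivTree_verts] at h; simp at h; omega
  | succ t ih =>
    intro hcard hsum
    obtain ⟨T, hG, hle, hcardT, hsumch, hout, hpr, hinv⟩ :=
      ih (by omega) (by omega)
    -- children supported in verts
    have hsupp : ∀ v, v ∉ T.verts → T.children v = 0 := fun v h =>
      children_eq_zero_of_notMem T h
    have hsum_verts : ∑ v ∈ T.verts, T.children v = t := by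
      rw [← hsumch]
      exact Finset.sum_subset (Finset.subset_univ _)
        (fun v _ hv => hsupp v hv)
    -- in-tree capacity strictly greater than t
    have hA : t < ∑ v ∈ T.verts, cc v := by
      by_contra hle'
      push_neg at hle'
      have h0 := hinv hle'
      have : ∑ v, cc v = ∑ v ∈ T.verts, cc v :=
        (Finset.sum_subset (Finset.subset_univ _) (fun v _ hv => h0 v hv)).symm
      omega
    -- vertex with spare capacity
    have hv : ∃ v ∈ T.verts, T.children v < cc v := by
      by_contra hc
      push_neg at hc
      have : ∑ v ∈ T.verts, cc v ≤ ∑ v ∈ T.verts, T.children v :=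
        Finset.sum_le_sum hc
      omega
    obtain ⟨v, hvmem, hvlt⟩ := hv
    -- a vertex outside the tree, of max capacity
    have hne : (univ \ T.verts).Nonempty := by
      rw [Finset.sdiff_nonempty]
      intro hsub
      have := Finset.card_le_card hsub
      rw [Finset.card_univ] at this
      omega
    obtain ⟨w, hwmem, hwmax⟩ := Finset.exists_max_image (univ \ T.verts) cc hne
    have hwout : w ∉ T.verts := (Finset.mem_sdiff.1 hwmem).2
    have hwr : w ≠ r := fun h => hwout (by rw [h]; exact T.root_mem)
    have hvw : v ≠ w := fun h => hwout (by rw [← h]; exact hvmem)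
    -- build the extended tree
    set p' := Function.update T.parent w v with hp'
    have hp'vert : ∀ u ∈ T.verts, p' u = T.parent u := by
      intro u hu
      exact Function.update_of_ne (fun h => hwout (by rw [← h]; exact hu)) _ _
    -- iterates agree and stay in verts
    have hiter : ∀ n : ℕ, ∀ u ∈ T.verts, T.parent^[n] u = r →
        p'^[n] u = r := by
      intro n
      induction n with
      | zero => intro u _ h; exact h
      | succ n ihn =>
        intro u hu h
        rw [Function.iterate_succ_apply] at h ⊢
        rw [hp'vert u hu]
        by_cases hur : u = r
        · exact ihn (T.parent u) (by rw [hur, hpr]; exact T.root_mem) h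
        · exact ihn _ (T.parent_mem u hu hur) h
    -- children of the new tree
    have hfilter : ∀ x, (insert w T.verts).filter (fun u => u ≠ r ∧ p' u = x) =
        if x = v then insert w (T.verts.filter fun u => u ≠ r ∧ T.parent u = x)
        else T.verts.filter fun u => u ≠ r ∧ T.parent u = x := by
      intro x
      have hcong : T.verts.filter (fun u => u ≠ r ∧ p' u = x) =
          T.verts.filter (fun u => u ≠ r ∧ T.parent u = x) :=
        Finset.filter_congr (fun u hu => by rw [hp'vert u hu])
      rw [Finset.filter_insert, hcong]
      by_cases hxv : x = v
      · subst hxv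
        rw [if_pos ⟨hwr, by rw [hp', Function.update_self]⟩, if_pos rfl]
      · rw [if_neg, if_neg hxv]
        rintro ⟨-, hpw⟩
        rw [hp', Function.update_self] at hpw
        exact hxv hpw.symm
    have hch : ∀ x, ((insert w T.verts).filter (fun u => u ≠ r ∧ p' u = x)).card =
        T.children x + if x = v then 1 else 0 := by
      intro x
      rw [hfilter x]
      by_cases hxv : x = v
      · subst hxv
        rw [if_pos rfl, if_pos rfl, Finset.card_insert_of_notMem
          (fun hmem => hwout (Finset.mem_of_mem_filter w hmem))]
        rfl
      · rw [if_neg hxv, if_neg hxv]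
        rfl
    have hpm : ∀ u ∈ insert w T.verts, u ≠ r → p' u ∈ insert w T.verts := by
      intro u hu hur
      rcases Finset.mem_insert.1 hu with h | h
      · subst h
        rw [hp', Function.update_self]
        exact mem_insert_of_mem hvmem
      · rw [hp'vert u h]
        exact mem_insert_of_mem (T.parent_mem u h hur)
    have hreach : ∀ u ∈ insert w T.verts, ∃ n : ℕ, p'^[n] u = r := by
      intro u hu
      rcases Finset.mem_insert.1 hu with h | h
      · subst h
        obtain ⟨n, hn⟩ := T.reach v hvmem
        refine ⟨n + 1, ?_⟩
        rw [Function.iterate_succ_apply, hp', Function.update_self]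
        exact hiter n v hvmem hn
      · obtain ⟨n, hn⟩ := T.reach u h
        exact ⟨n, hiter n u h hn⟩
    refine ⟨⟨insert w T.verts, mem_insert_of_mem T.root_mem, p', hpm, hreach⟩,
      ?_, ?_, ?_, ?_, ?_, ?_, ?_⟩
    · -- inGraph
      intro u hu hur
      rw [SimpleGraph.top_adj]
      rcases Finset.mem_insert.1 hu with h | h
      · subst h
        show p' u ≠ u
        rw [hp', Function.update_self]
        exact hvw
      · show p' u ≠ u
        rw [hp'vert u h]
        exact (SimpleGraph.top_adj _ _).1 (hG u h hur)
    · -- children bound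
      intro x
      show ((insert w T.verts).filter (fun u => u ≠ r ∧ p' u = x)).card ≤ cc x
      rw [hch x]
      by_cases hxv : x = v
      · subst hxv; rw [if_pos rfl]; omega
      · rw [if_neg hxv]; simpa using hle x
    · -- card
      show (insert w T.verts).card = t + 1 + 1
      rw [Finset.card_insert_of_notMem hwout, hcardT]
    · -- sum of children
      show (∑ x, ((insert w T.verts).filter (fun u => u ≠ r ∧ p' u = x)).card) = t + 1
      have : (∑ x, ((insert w T.verts).filter (fun u => u ≠ r ∧ p' u = x)).card)
          = ∑ x, (T.children x + if x = v then 1 else 0) :=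
        Finset.sum_congr rfl fun x _ => hch x
      rw [this, Finset.sum_add_distrib, hsumch, Finset.sum_ite_eq' univ v fun _ => 1,
        if_pos (mem_univ v)]
    · -- parent eq id outside
      intro u hu
      have hune : u ≠ w := fun h => hu (by rw [h]; exact Finset.mem_insert_self w T.verts)
      have huout : u ∉ T.verts := fun h => hu (mem_insert_of_mem h)
      show p' u = u
      rw [hp', Function.update_of_ne hune, hout u huout]
    · -- parent r = r
      show p' r = r
      rw [hp', Function.update_of_ne (Ne.symm hwr), hpr]
    · -- saturation invariant
      intro hsat w' hw'
      have hw'T : w' ∉ T.verts := fun h => hw' (mem_insert_of_mem h)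
      rw [Finset.sum_insert hwout] at hsat
      have hcw : cc w = 0 := by omega
      have := hwmax w' (Finset.mem_sdiff.2 ⟨mem_univ _, hw'T⟩)
      omega



lemma sum_comp_update {K : ℕ} (g : RTree V r → ℕ) (f : Fin K → RTree V r) (i : Fin K)
    (b : RTree V r) :
    (∑ k, g (Function.update f i b k)) + g (f i) = (∑ k, g (f k)) + g b := by
  have hfun : ∀ k, g (Function.update f i b k) = Function.update (fun k => g (f k)) i (g b) k := by
    intro k
    by_cases h : k = i
    · subst h; simp
    · simp [Function.update_of_ne h]
  have h1 : (∑ k, g (Function.update f i b k)) = g b + ∑ k ∈ univ \ {i}, g (f k) := by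
    have he : (∑ k, g (Function.update f i b k)) =
        ∑ k, Function.update (fun k => g (f k)) i (g b) k :=
      Finset.sum_congr rfl (fun k _ => hfun k)
    rw [he]
    exact Finset.sum_update_of_mem (mem_univ i) _ _
  have h2 : (∑ k, g (f k)) = (∑ k ∈ univ \ {i}, g (f k)) + g (f i) :=
    Finset.sum_eq_sum_sdiff_singleton_add (mem_univ i) _
  omega

lemma mainPack (K : ℕ) : ∀ m : ℕ, ∀ (c : V → ℕ) (E : ℕ), m ≤ c r → m ≤ K → m ≤ E →
    E ≤ ∑ v, c v → E ≤ m * (Fintype.card V - 1) →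
    ∃ T : Fin K → RTree V r, (∀ k, (T k).inGraph ⊤) ∧ (∀ v, (∑ k, (T k).children v) ≤ c v) ∧
      (∀ k : Fin K, m ≤ (k : ℕ) → (T k).verts = {r}) ∧ (∑ k, (T k).verts.card) = K + E := by
  intro m
  induction m with
  | zero =>
    intro c E _ _ hmE hE2 hE3
    have hE0 : E = 0 := by omega
    refine ⟨fun _ => trivTree r, ?_, ?_, fun _ _ => rfl, ?_⟩
    · intro k v hv hne
      rw [trivTree_verts, mem_singleton] at hv
      exact absurd hv hne
    · intro v
      simp [children_of_singleton _ trivTree_verts]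
    · simp [trivTree_verts, hE0]
  | succ m ih =>
    intro c E h1 h2 h3 h4 h5
    have hV : Nonempty V := ⟨r⟩
    have hn1 : 1 ≤ Fintype.card V := Fintype.card_pos
    have hn2 : 2 ≤ Fintype.card V := by
      by_contra hc
      have hz : Fintype.card V - 1 = 0 := by omega
      rw [hz, Nat.mul_zero] at h5
      omega
    set cc := Function.update c r (c r - m) with hcc
    have hccr : cc r = c r - m := Function.update_self r _ c
    have hccle : ∀ v, cc v ≤ c v := by
      intro v
      by_cases hv : v = r
      · subst hv; rw [hccr]; omega
      · rw [hcc, Function.update_of_ne hv]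
    have hsumcc : (∑ v, cc v) + m = ∑ v, c v := by
      have e1 : (∑ v, cc v) = (c r - m) + ∑ v ∈ univ \ {r}, c v :=
        Finset.sum_update_of_mem (mem_univ r) c (c r - m)
      have e2 : (∑ v, c v) = (∑ v ∈ univ \ {r}, c v) + c r :=
        Finset.sum_eq_sum_sdiff_singleton_add (mem_univ r) c
      omega
    obtain ⟨t, htdef⟩ : ∃ t, t = min (Fintype.card V - 1) (E - m) := ⟨_, rfl⟩
    have hccr1 : 1 ≤ cc r := by omega
    have hta : t + 1 ≤ Fintype.card V := by omega
    have htb : t ≤ ∑ v, cc v := by omega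
    obtain ⟨T₀, hG0, hle0, hcard0, hsum0, -, -, -⟩ :=
      singleTree cc hccr1 t hta htb
    have hchc : ∀ v, T₀.children v ≤ c v := fun v => le_trans (hle0 v) (hccle v)
    set c' := fun v => c v - T₀.children v with hc'
    have hsumc' : (∑ v, c' v) + t = ∑ v, c v := by
      have e1 : (∑ v, (c' v + T₀.children v)) = ∑ v, c v :=
        Finset.sum_congr rfl fun v _ => by have := hchc v; simp only [hc']; omega
      rw [Finset.sum_add_distrib, hsum0] at e1
      exact e1
    have hchr : T₀.children r ≤ c r - m := by
      have := hle0 r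
      omega
    have hsucc : (m + 1) * (Fintype.card V - 1) = m * (Fintype.card V - 1) + (Fintype.card V - 1) :=
      Nat.succ_mul m _
    have hmm : m ≤ m * (Fintype.card V - 1) := Nat.le_mul_of_pos_right m (by omega)
    have ha1 : m ≤ c' r := by simp only [hc']; omega
    have ha2 : m ≤ K := by omega
    have ha3 : m ≤ E - t := by omega
    have ha4 : E - t ≤ ∑ v, c' v := by omega
    have ha5 : E - t ≤ m * (Fintype.card V - 1) := by omega
    obtain ⟨Tf, hGf, hcapf, hsparef, hsumf⟩ := ih c' (E - t) ha1 ha2 ha3 ha4 ha5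
    have hmK : m < K := by omega
    obtain ⟨i, hi⟩ : ∃ i : Fin K, (i : ℕ) = m := ⟨⟨m, hmK⟩, rfl⟩
    have hTfm : (Tf i).verts = {r} := hsparef i (by omega)
    refine ⟨Function.update Tf i T₀, ?_, ?_, ?_, ?_⟩
    · intro k
      by_cases h : k = i
      · subst h; rw [Function.update_self]; exact hG0
      · rw [Function.update_of_ne h]; exact hGf k
    · intro v
      have hcu : (∑ k, (Function.update Tf i T₀ k).children v) + (Tf i).children v
          = (∑ k, (Tf k).children v) + T₀.children v :=
        sum_comp_update (fun T => T.children v) Tf i T₀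
      have hz : (Tf i).children v = 0 := children_of_singleton _ hTfm v
      have := hcapf v
      have := hchc v
      have ho : c' v = c v - T₀.children v := rfl
      omega
    · intro k hk
      have hki : k ≠ i := by
        intro h
        rw [h] at hk
        omega
      rw [Function.update_of_ne hki]
      exact hsparef k (by omega)
    · have hcu : (∑ k, (Function.update Tf i T₀ k).verts.card) + (Tf i).verts.card
          = (∑ k, (Tf k).verts.card) + T₀.verts.card :=
        sum_comp_update (fun T => T.verts.card) Tf i T₀
      have h1' : (Tf i).verts.card = 1 := by rw [hTfm]; exact card_singleton r
      omega

end Aux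

/-- On the complete graph, the maximum total number of spanned vertices over all
bounded rooted-tree packings equals `(K - k̄) + min (k̄ + ∑ c) (k̄ * n)` with
`k̄ = min (c r) K`. -/
theorem complete_graph_max_packing {V : Type} [DecidableEq V] [Fintype V]
    (c : V → ℕ) (r : V) (K : ℕ) :
    IsGreatest (packSums (⊤ : SimpleGraph V) c r K)
      ((K - min (c r) K) +
        min (min (c r) K + ∑ v, c v) (min (c r) K * Fintype.card V)) := by
  have hV : Nonempty V := ⟨r⟩
  have hn1 : 1 ≤ Fintype.card V := Fintype.card_pos
  have hmul : (min (c r) K) * Fintype.card V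
      = (min (c r) K) * (Fintype.card V - 1) + min (c r) K := by
    obtain ⟨n', hn'⟩ : ∃ n', Fintype.card V = n' + 1 := ⟨Fintype.card V - 1, by omega⟩
    rw [hn']
    simp [Nat.mul_succ]
  have hcr_le : c r ≤ ∑ v, c v :=
    Finset.single_le_sum (f := c) (fun _ _ => Nat.zero_le _) (mem_univ r)
  constructor
  · -- membership
    by_cases hn2 : 2 ≤ Fintype.card V
    · obtain ⟨T, hG, hcap, -, hsum⟩ := mainPack K (min (c r) K) c
        (min (∑ v, c v) (min (c r) K * (Fintype.card V - 1)))
        (min_le_left _ _) (min_le_right _ _)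
        (le_min (by omega) (Nat.le_mul_of_pos_right _ (by omega)))
        (min_le_left _ _) (min_le_right _ _)
      exact ⟨T, ⟨hG, hcap⟩, by omega⟩
    · obtain ⟨T, hG, hcap, -, hsum⟩ := mainPack K 0 c 0
        (by omega) (by omega) (by omega) (by omega) (by omega)
      have h1 : Fintype.card V = 1 := by omega
      have h2 : (min (c r) K) * Fintype.card V = min (c r) K := by
        rw [h1, Nat.mul_one]
      exact ⟨T, ⟨hG, hcap⟩, by omega⟩
  · -- upper bound
    rintro S ⟨T, ⟨hG, hcap⟩, rfl⟩
    set b : Fin K → ℕ := fun k => if 2 ≤ (T k).verts.card then 1 else 0 with hbdef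
    have hbound : ∀ k, (T k).verts.card ≤ 1 + b k * (Fintype.card V - 1) := by
      intro k
      have h1 : 1 ≤ (T k).verts.card := Finset.card_pos.2 ⟨r, (T k).root_mem⟩
      have h2 : (T k).verts.card ≤ Fintype.card V := Finset.card_le_univ _
      by_cases h : 2 ≤ (T k).verts.card
      · simp only [hbdef, if_pos h, one_mul]
        omega
      · simp only [hbdef, if_neg h]
        omega
    have hb_ch : ∀ k, b k ≤ (T k).children r := by
      intro k
      by_cases h : 2 ≤ (T k).verts.card
      · simp only [hbdef, if_pos h]
        exact children_root_pos _ h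
      · simp only [hbdef, if_neg h]
        exact Nat.zero_le _
    have hbcr : (∑ k, b k) ≤ c r :=
      le_trans (Finset.sum_le_sum fun k _ => hb_ch k) (hcap r)
    have hbK : (∑ k, b k) ≤ K := by
      have h1 : ∀ k, b k ≤ 1 := by
        intro k
        simp only [hbdef]
        split <;> omega
      calc (∑ k, b k) ≤ ∑ _k : Fin K, 1 := Finset.sum_le_sum fun k _ => h1 k
        _ = K := by simp
    have hS1 : (∑ k, (T k).verts.card) ≤ K + ∑ v, c v := by
      calc (∑ k, (T k).verts.card) = ∑ k, (1 + ∑ v, (T k).children v) :=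
            Finset.sum_congr rfl fun k _ => card_verts_eq (T k)
        _ = K + ∑ k, ∑ v, (T k).children v := by
            rw [Finset.sum_add_distrib]
            simp
        _ = K + ∑ v, ∑ k, (T k).children v := by rw [Finset.sum_comm]
        _ ≤ K + ∑ v, c v := Nat.add_le_add_left (Finset.sum_le_sum fun v _ => hcap v) K
    have hS2 : (∑ k, (T k).verts.card) ≤ K + (∑ k, b k) * (Fintype.card V - 1) := by
      calc (∑ k, (T k).verts.card) ≤ ∑ k, (1 + b k * (Fintype.card V - 1)) :=
            Finset.sum_le_sum fun k _ => hbound k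
        _ = K + (∑ k, b k) * (Fintype.card V - 1) := by
            rw [Finset.sum_add_distrib, ← Finset.sum_mul]
            simp
    have hP : (∑ k, b k) * (Fintype.card V - 1) ≤ (min (c r) K) * (Fintype.card V - 1) :=
      Nat.mul_le_mul_right _ (by omega)
    omega
end

section
/- Let G be a rooted tree with root r and capacities c, and let g(r)_K be the optimal value of the tree dynamic program defined by g(v)_k = k for leaves v and g(u)_k = k + max over allocations (i_1,…,i_d) ∈ {0,…,k}^d with ∑ i_j ≤ c_u of ∑_j g(v_j)_{i_j}·[i_j ≥ 1] for internal u with children v_1,…,v_d. Then g(r)_K equals the maximum of ∑_{k=1}^K |V_k| over all bounded rooted-tree packings of K trees in G. -/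
open Finset

/-- A packing of `k` trees inside the subtree of the rooted tree `G` rooted at `v`:
all vertices are descendants of `v` in `G`, parents agree with `G`, capacities hold. -/
def subPacking {V : Type} [DecidableEq V] [Fintype V] {r : V} (G : RTree V r) (c : V → ℕ)
    (v : V) {k : ℕ} (T : Fin k → RTree V v) : Prop :=
  (∀ i, ∀ u ∈ (T i).verts, u ∈ G.verts ∧ ∃ n : ℕ, G.parent^[n] u = v) ∧
  (∀ i, ∀ u ∈ (T i).verts, u ≠ v → (T i).parent u = G.parent u) ∧
  (∀ u : V, (∑ i, (T i).children u) ≤ c u)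

/-- `gval G c v k`: the optimal value of the MBRTP sub-instance at `v` with `k` trees. -/
noncomputable def gval {V : Type} [DecidableEq V] [Fintype V] {r : V} (G : RTree V r)
    (c : V → ℕ) (v : V) (k : ℕ) : ℕ :=
  sSup {S | ∃ T : Fin k → RTree V v, subPacking G c v T ∧ S = ∑ i, (T i).verts.card}

/-- The set of children of `u` in the rooted tree `G`. -/
def RTree.childSet {V : Type} [DecidableEq V] {r : V} (G : RTree V r) (u : V) : Finset V :=
  G.verts.filter fun w => w ≠ r ∧ G.parent w = u

set_option maxHeartbeats 1000000
set_option linter.unusedSectionVars false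
set_option linter.unusedVariables false
set_option linter.unnecessarySimpa false

namespace TreeDP

variable {V : Type} [DecidableEq V] [Fintype V] {r : V}

variable (G : RTree V r) (hall : ∀ v : V, ∃ n : ℕ, G.parent^[n] v = r)

noncomputable def dep (v : V) : ℕ := Nat.find (hall v)

lemma dep_spec (v : V) : G.parent^[dep G hall v] v = r := Nat.find_spec (hall v)

lemma dep_min {v : V} {m : ℕ} (h : m < dep G hall v) : G.parent^[m] v ≠ r :=
  Nat.find_min (hall v) h

lemma dep_le {v : V} {n : ℕ} (h : G.parent^[n] v = r) : dep G hall v ≤ n :=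
  Nat.find_le h

lemma dep_root : dep G hall r = 0 := Nat.le_zero.mp (dep_le G hall (by simp))

lemma dep_pos {v : V} (hv : v ≠ r) : 1 ≤ dep G hall v := by
  by_contra h
  push_neg at h
  interval_cases hd : dep G hall v
  · exact hv (by simpa [hd] using dep_spec G hall v)

lemma dep_parent {v : V} (hv : v ≠ r) : dep G hall (G.parent v) + 1 = dep G hall v := by
  have h1 : dep G hall v ≤ dep G hall (G.parent v) + 1 := by
    apply dep_le
    rw [Function.iterate_succ_apply]
    exact dep_spec G hall (G.parent v)
  have hp := dep_pos G hall hv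
  have h2 : dep G hall (G.parent v) ≤ dep G hall v - 1 := by
    apply dep_le
    rw [← Function.iterate_succ_apply]
    simp only [Nat.succ_eq_add_one]
    have : dep G hall v - 1 + 1 = dep G hall v := by omega
    rw [this]
    exact dep_spec G hall v
  omega

lemma dep_lt_card (v : V) : dep G hall v < Fintype.card V := by
  have key : Function.Injective (fun i : Fin (dep G hall v + 1) => G.parent^[(i : ℕ)] v) := by
    have key2 : ∀ i j : ℕ, i < j → j ≤ dep G hall v →
        G.parent^[i] v ≠ G.parent^[j] v := by
      intro i j hij hj heq
      apply dep_min G hall (show dep G hall v - j + i < dep G hall v by omega)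
      calc G.parent^[dep G hall v - j + i] v
          = G.parent^[dep G hall v - j] (G.parent^[i] v) := by
            rw [Function.iterate_add_apply]
        _ = G.parent^[dep G hall v - j] (G.parent^[j] v) := by rw [heq]
        _ = G.parent^[dep G hall v - j + j] v := by rw [Function.iterate_add_apply]
        _ = r := by
            have : dep G hall v - j + j = dep G hall v := by omega
            rw [this]; exact dep_spec G hall v
    intro i j hij
    rcases lt_trichotomy (i : ℕ) (j : ℕ) with h | h | h
    · exact absurd hij (key2 i j h (by omega))
    · exact Fin.ext h
    · exact absurd hij.symm (key2 j i h (by omega))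
  have := Fintype.card_le_of_injective _ key
  simpa using this

def isDesc (v u : V) : Prop := ∃ n, n ≤ dep G hall u ∧ G.parent^[n] u = v

lemma isDesc_refl (v : V) : isDesc G hall v v := ⟨0, Nat.zero_le _, rfl⟩

lemma isDesc_root (u : V) : isDesc G hall r u := ⟨dep G hall u, le_refl _, dep_spec G hall u⟩

lemma dep_add_of {v u : V} {n : ℕ} (hn : n ≤ dep G hall u) (he : G.parent^[n] u = v) :
    n + dep G hall v = dep G hall u := by
  have h1 : dep G hall u ≤ dep G hall v + n := by
    apply dep_le
    rw [Function.iterate_add_apply, he]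
    exact dep_spec G hall v
  have h2 : dep G hall v ≤ dep G hall u - n := by
    apply dep_le
    rw [← he, ← Function.iterate_add_apply]
    have : dep G hall u - n + n = dep G hall u := by omega
    rw [this]
    exact dep_spec G hall u
  omega

lemma isDesc_dep_le {v u : V} (h : isDesc G hall v u) : dep G hall v ≤ dep G hall u := by
  obtain ⟨n, hn, he⟩ := h
  have := dep_add_of G hall hn he
  omega

lemma isDesc_canon {v u : V} (h : isDesc G hall v u) :
    G.parent^[dep G hall u - dep G hall v] u = v := by
  obtain ⟨n, hn, he⟩ := h
  have := dep_add_of G hall hn he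
  have hn' : n = dep G hall u - dep G hall v := by omega
  rwa [← hn']

lemma isDesc_unique {v v' u : V} (h : isDesc G hall v u) (h' : isDesc G hall v' u)
    (hd : dep G hall v = dep G hall v') : v = v' := by
  rw [← isDesc_canon G hall h, ← isDesc_canon G hall h', hd]

lemma isDesc_trans {v w u : V} (h1 : isDesc G hall v w) (h2 : isDesc G hall w u) :
    isDesc G hall v u := by
  obtain ⟨n1, hn1, he1⟩ := h1
  obtain ⟨n2, hn2, he2⟩ := h2
  have d1 := dep_add_of G hall hn1 he1
  have d2 := dep_add_of G hall hn2 he2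
  exact ⟨n1 + n2, by omega, by rw [Function.iterate_add_apply, he2, he1]⟩

lemma isDesc_parent {v u : V} (h : isDesc G hall v u) (hne : u ≠ v) :
    u ≠ r ∧ isDesc G hall v (G.parent u) ∧ dep G hall v < dep G hall u := by
  obtain ⟨n, hn, he⟩ := h
  have hd := dep_add_of G hall hn he
  have hn0 : n ≠ 0 := by rintro rfl; exact hne he
  have hur : u ≠ r := by
    rintro rfl
    have := dep_root G hall
    omega
  have hdp := dep_parent G hall hur
  refine ⟨hur, ⟨n - 1, by omega, ?_⟩, by omega⟩
  rw [← Function.iterate_succ_apply]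
  simp only [Nat.succ_eq_add_one]
  have : n - 1 + 1 = n := by omega
  rw [this, he]

lemma isDesc_child {v w : V} (hw : w ≠ r) (hp : G.parent w = v) :
    isDesc G hall v w ∧ dep G hall w = dep G hall v + 1 := by
  have h1 : isDesc G hall v w := ⟨1, dep_pos G hall hw, by simpa using hp⟩
  refine ⟨h1, ?_⟩
  have := dep_add_of G hall (dep_pos G hall hw) (show G.parent^[1] w = v by simpa using hp)
  omega

lemma isDesc_step {v u : V} (h : isDesc G hall v u) (hne : u ≠ v) :
    ∃ w, w ≠ r ∧ G.parent w = v ∧ isDesc G hall w u := by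
  obtain ⟨n, hn, he⟩ := h
  have hn0 : n ≠ 0 := by rintro rfl; exact hne he
  refine ⟨G.parent^[n - 1] u, ?_, ?_, ⟨n - 1, by omega, rfl⟩⟩
  · intro hr
    exact dep_min G hall (show n - 1 < dep G hall u by omega) hr
  · rw [← Function.iterate_succ_apply' G.parent (n - 1) u]
    simp only [Nat.succ_eq_add_one]
    have : n - 1 + 1 = n := by omega
    rw [this, he]


def famOK (c : V → ℕ) (v : V) {k : ℕ} (S : Fin k → Finset V) : Prop :=
  (∀ j, v ∈ S j) ∧ (∀ j, ∀ u ∈ S j, isDesc G hall v u) ∧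
  (∀ j, ∀ u ∈ S j, u ≠ v → G.parent u ∈ S j) ∧
  (∀ u : V, (∑ j, ((S j).filter fun x => x ≠ v ∧ G.parent x = u).card) ≤ c u)

def Mset (c : V → ℕ) (v : V) (k : ℕ) : Set ℕ :=
  {s | ∃ S : Fin k → Finset V, famOK G hall c v S ∧ s = ∑ j, (S j).card}

lemma famOK_triv (c : V → ℕ) (v : V) (k : ℕ) :
    famOK G hall c v (fun _ : Fin k => ({v} : Finset V)) := by
  refine ⟨fun j => by simp, fun j u hu => ?_, fun j u hu hne => ?_, fun u => ?_⟩
  · simp only [mem_singleton] at hu; subst hu; exact ⟨0, Nat.zero_le _, rfl⟩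
  · simp only [mem_singleton] at hu; exact absurd hu hne
  · have h0 : (({v} : Finset V).filter fun x => x ≠ v ∧ G.parent x = u) = ∅ := by
      ext x; simp +contextual
    simp only [h0, Finset.card_empty, Finset.sum_const_zero]
    exact Nat.zero_le _

lemma Mset_nonempty (c : V → ℕ) (v : V) (k : ℕ) : (Mset G hall c v k).Nonempty :=
  ⟨k, fun _ => {v}, famOK_triv G hall c v k, by simp⟩

lemma Mset_bdd (c : V → ℕ) (v : V) (k : ℕ) : BddAbove (Mset G hall c v k) := by
  refine ⟨k * Fintype.card V, fun s hs => ?_⟩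
  obtain ⟨S, _, rfl⟩ := hs
  calc (∑ j, (S j).card) ≤ ∑ _j : Fin k, Fintype.card V :=
        Finset.sum_le_sum fun j _ => by
          simpa using Finset.card_le_card (Finset.subset_univ (S j))
    _ = k * Fintype.card V := by simp [mul_comm]

lemma pack_eq (c : V → ℕ) (hspan : G.verts = Finset.univ) (K : ℕ) :
    {S | ∃ T : Fin K → RTree V r, subPacking G c r T ∧ S = ∑ k, (T k).verts.card}
      = Mset G hall c r K := by
  ext s
  constructor
  · rintro ⟨T, hsub, rfl⟩
    refine ⟨fun j => (T j).verts, ⟨fun j => (T j).root_mem,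
      fun j u _ => isDesc_root G hall u,
      fun j u hu hne => by
        have h := (T j).parent_mem u hu hne
        rwa [hsub.2.1 j u hu hne] at h,
      fun u => ?_⟩, rfl⟩
    refine le_trans (le_of_eq ?_) (hsub.2.2 u)
    refine Finset.sum_congr rfl fun j _ => ?_
    unfold RTree.children
    congr 1
    refine Finset.filter_congr fun x hx => ?_
    by_cases hne : x = r
    · simp [hne]
    · rw [hsub.2.1 j x hx hne]
  · rintro ⟨S, ⟨h1, h2, h3, h4⟩, rfl⟩
    refine ⟨fun j => ⟨S j, h1 j, G.parent,
      fun u hu hne => h3 j u hu hne, fun u _ => hall u⟩,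
      ⟨fun j u hu => ⟨by simp [hspan], hall u⟩, fun j u hu hne => rfl, fun u => ?_⟩, rfl⟩
    simpa [RTree.children] using h4 u

lemma mem_childSet (hspan : G.verts = Finset.univ) {w u : V} :
    w ∈ G.childSet u ↔ w ≠ r ∧ G.parent w = u := by
  simp [RTree.childSet, hspan]


lemma card_filter_fin_lt {k m : ℕ} (h : m ≤ k) :
    ((univ : Finset (Fin k)).filter fun j : Fin k => (j : ℕ) < m).card = m := by
  have hmap : (univ : Finset (Fin k)).filter (fun j : Fin k => (j : ℕ) < m)
      = (univ : Finset (Fin m)).map (Fin.castLEEmb h) := by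
    ext j
    simp only [mem_filter, mem_univ, true_and, mem_map]
    constructor
    · intro hj
      exact ⟨⟨(j : ℕ), hj⟩, Fin.ext rfl⟩
    · rintro ⟨y, rfl⟩
      simpa using y.isLt
  rw [hmap, Finset.card_map, Finset.card_univ, Fintype.card_fin]

lemma sum_dite_fin {k m : ℕ} (h : m ≤ k) (g : Fin m → ℕ) :
    (∑ j : Fin k, if hj : (j : ℕ) < m then g ⟨j, hj⟩ else 0) = ∑ t : Fin m, g t := by
  set f : ℕ → ℕ := fun j => if hj : j < m then g ⟨j, hj⟩ else 0 with hf
  have h1 : (∑ j : Fin k, if hj : (j : ℕ) < m then g ⟨j, hj⟩ else 0) = ∑ j ∈ range k, f j :=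
    Fin.sum_univ_eq_sum_range f k
  have h2 : ∑ j ∈ range m, f j = ∑ j ∈ range k, f j := by
    apply Finset.sum_subset (Finset.range_subset_range.mpr h)
    intro x _ hnx
    rw [Finset.mem_range] at hnx
    simp only [hf]
    rw [dif_neg (by omega)]
  have h3 : ∑ j ∈ range m, f j = ∑ t : Fin m, g t := by
    rw [← Fin.sum_univ_eq_sum_range f m]
    refine Finset.sum_congr rfl fun t _ => ?_
    simp only [hf]
    rw [dif_pos t.isLt]
  rw [h1, ← h2, h3]

lemma walk_mem {c : V → ℕ} {v : V} {k : ℕ} {S : Fin k → Finset V}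
    (hOK : famOK G hall c v S) {w : V} (hwv : dep G hall v < dep G hall w) :
    ∀ (n : ℕ) (x : V) (j : Fin k), x ∈ S j → n ≤ dep G hall x →
      G.parent^[n] x = w → w ∈ S j := by
  intro n
  induction n with
  | zero =>
    intro x j hx _ he
    rw [Function.iterate_zero_apply] at he
    rwa [← he]
  | succ n ihn =>
    intro x j hx hn he
    have hxr : x ≠ r := by
      rintro rfl
      rw [dep_root G hall] at hn
      omega
    have hdp := dep_parent G hall hxr
    have hda := dep_add_of G hall hn he
    have hxv : x ≠ v := by
      rintro rfl
      omega
    have hp : G.parent x ∈ S j := hOK.2.2.1 j x hx hxv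
    refine ihn (G.parent x) j hp (by omega) ?_
    rw [← Function.iterate_succ_apply G.parent n x]
    exact he

lemma M_le (c : V → ℕ) (hspan : G.verts = Finset.univ) (v : V) (k : ℕ) (hk : 1 ≤ k) :
    sSup (Mset G hall c v k) ≤ k + sSup {S | ∃ i : V → ℕ, (∀ w, i w ≤ k) ∧
      (∑ w ∈ G.childSet v, i w) ≤ c v ∧
      S = ∑ w ∈ G.childSet v, if 1 ≤ i w then sSup (Mset G hall c w (i w)) else 0} := by
  classical
  apply csSup_le (Mset_nonempty G hall c v k)
  rintro s ⟨S, hOK, rfl⟩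
  obtain ⟨h1, h2, h3, h4⟩ := hOK
  set P : V → Fin k → Finset V := fun w j => (S j).filter (fun x => isDesc G hall w x) with hP
  have hdepw : ∀ w ∈ G.childSet v, dep G hall w = dep G hall v + 1 := by
    intro w hw
    rw [mem_childSet G hspan] at hw
    exact (isDesc_child G hall hw.1 hw.2).2
  have hxnev : ∀ w ∈ G.childSet v, ∀ x, isDesc G hall w x → x ≠ v := by
    intro w hw x hx
    have := isDesc_dep_le G hall hx
    have := hdepw w hw
    intro hxe; subst hxe; omega
  -- partition of S j
  have hpart : ∀ j, S j = insert v ((G.childSet v).biUnion fun w => P w j) := by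
    intro j
    ext x
    simp only [Finset.mem_insert, Finset.mem_biUnion, hP, Finset.mem_filter]
    constructor
    · intro hx
      by_cases hxv : x = v
      · exact Or.inl hxv
      · obtain ⟨w, hwr, hwp, hwd⟩ := isDesc_step G hall (h2 j x hx) hxv
        exact Or.inr ⟨w, (mem_childSet G hspan).mpr ⟨hwr, hwp⟩, hx, hwd⟩
    · rintro (rfl | ⟨w, _, hx, _⟩)
      · exact h1 j
      · exact hx
  have hdisj : ∀ j, ∀ w ∈ G.childSet v, ∀ w' ∈ G.childSet v, w ≠ w' →
      Disjoint (P w j) (P w' j) := by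
    intro j w hw w' hw' hne
    rw [Finset.disjoint_left]
    intro x hx hx'
    simp only [hP, Finset.mem_filter] at hx hx'
    exact hne (isDesc_unique G hall hx.2 hx'.2 (by rw [hdepw w hw, hdepw w' hw']))
  have hvnot : ∀ j, v ∉ (G.childSet v).biUnion fun w => P w j := by
    intro j hv
    simp only [Finset.mem_biUnion, hP, Finset.mem_filter] at hv
    obtain ⟨w, hw, _, hd⟩ := hv
    exact (hxnev w hw v hd) rfl
  have hcard : ∀ j, (S j).card = 1 + ∑ w ∈ G.childSet v, (P w j).card := by
    intro j
    rw [hpart j, Finset.card_insert_of_notMem (hvnot j), Finset.card_biUnion (hdisj j)]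
    omega
  -- the allocation
  set J : V → Finset (Fin k) := fun w => univ.filter fun j => w ∈ S j with hJ
  set i : V → ℕ := fun w => (J w).card with hi
  have hik : ∀ w, i w ≤ k := by
    intro w
    simp only [hi]
    calc (J w).card ≤ (univ : Finset (Fin k)).card := Finset.card_le_card (Finset.filter_subset _ _)
      _ = k := by simp
  -- capacity at v
  have hfiltv : ∀ j, ((S j).filter fun x => x ≠ v ∧ G.parent x = v)
      = (G.childSet v).filter fun w => w ∈ S j := by
    intro j
    ext x
    simp only [Finset.mem_filter]
    constructor
    · rintro ⟨hx, hne, hp⟩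
      have hd := h2 j x hx
      have hxr := (isDesc_parent G hall hd hne).1
      exact ⟨(mem_childSet G hspan).mpr ⟨hxr, hp⟩, hx⟩
    · rintro ⟨hcs, hx⟩
      have h5 := (mem_childSet G hspan).mp hcs
      refine ⟨hx, ?_, h5.2⟩
      have := hdepw x hcs
      intro hxe; subst hxe; omega
  have hcapv : (∑ w ∈ G.childSet v, i w) ≤ c v := by
    have : ∀ w, i w = ∑ j : Fin k, if w ∈ S j then 1 else 0 := by
      intro w
      simp only [hi, hJ]
      rw [Finset.card_filter]
    calc (∑ w ∈ G.childSet v, i w)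
        = ∑ w ∈ G.childSet v, ∑ j : Fin k, if w ∈ S j then 1 else 0 := by
          exact Finset.sum_congr rfl fun w _ => this w
      _ = ∑ j : Fin k, ∑ w ∈ G.childSet v, if w ∈ S j then 1 else 0 := Finset.sum_comm
      _ = ∑ j : Fin k, ((G.childSet v).filter fun w => w ∈ S j).card := by
          exact Finset.sum_congr rfl fun j _ => (Finset.card_filter _ _).symm
      _ = ∑ j : Fin k, ((S j).filter fun x => x ≠ v ∧ G.parent x = v).card := by
          exact Finset.sum_congr rfl fun j _ => by rw [hfiltv j]
      _ ≤ c v := h4 v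
  -- per-child bound
  have hchbd : ∀ w ∈ G.childSet v, (∑ j : Fin k, (P w j).card)
      ≤ if 1 ≤ i w then sSup (Mset G hall c w (i w)) else 0 := by
    intro w hw
    have hwdep : dep G hall v < dep G hall w := by rw [hdepw w hw]; omega
    have hPmem : ∀ j, ∀ x ∈ P w j, x ∈ S j ∧ isDesc G hall w x := by
      intro j x hx
      simpa only [hP, Finset.mem_filter] using hx
    have hPw : ∀ j, (P w j).Nonempty → w ∈ S j := by
      rintro j ⟨x, hx⟩
      obtain ⟨hxS, hxd⟩ := hPmem j x hx
      obtain ⟨n, hn, he⟩ := hxd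
      exact walk_mem G hall ⟨h1, h2, h3, h4⟩ hwdep n x j hxS hn he
    by_cases hiw : 1 ≤ i w
    · rw [if_pos hiw]
      -- reindex over J w
      have hsumJ : ∀ f : Fin k → ℕ, (∑ t : Fin (i w), f ((J w).equivFin.symm t : Fin k))
          = ∑ j ∈ J w, f j := by
        intro f
        rw [← Finset.sum_coe_sort (J w) f]
        exact Fintype.sum_equiv (J w).equivFin.symm _ _ fun t => rfl
      have hTOK : famOK G hall c w (fun t : Fin (i w) => P w ((J w).equivFin.symm t : Fin k)) := by
        refine ⟨?_, ?_, ?_, ?_⟩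
        · intro t
          have hj : ((J w).equivFin.symm t : Fin k) ∈ J w := ((J w).equivFin.symm t).2
          simp only [hJ, Finset.mem_filter] at hj
          simp only [hP, Finset.mem_filter]
          exact ⟨hj.2, isDesc_refl G hall w⟩
        · intro t x hx
          exact (hPmem _ x hx).2
        · intro t x hx hne
          obtain ⟨hxS, hxd⟩ := hPmem _ x hx
          have hni := isDesc_parent G hall hxd hne
          have hxv : x ≠ v := hxnev w hw x hxd
          simp only [hP, Finset.mem_filter]
          exact ⟨h3 _ x hxS hxv, hni.2.1⟩
        · intro u
          have hsub : ∀ j : Fin k, ((P w j).filter fun x => x ≠ w ∧ G.parent x = u).card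
              ≤ ((S j).filter fun x => x ≠ v ∧ G.parent x = u).card := by
            intro j
            apply Finset.card_le_card
            intro x hx
            simp only [Finset.mem_filter] at hx ⊢
            obtain ⟨hxP, hxw, hxu⟩ := hx
            obtain ⟨hxS, hxd⟩ := hPmem j x hxP
            exact ⟨hxS, hxnev w hw x hxd, hxu⟩
          calc (∑ t : Fin (i w),
                ((P w ((J w).equivFin.symm t : Fin k)).filter
                  fun x => x ≠ w ∧ G.parent x = u).card)
              = ∑ j ∈ J w, ((P w j).filter fun x => x ≠ w ∧ G.parent x = u).card :=
                hsumJ (fun j => ((P w j).filter fun x => x ≠ w ∧ G.parent x = u).card)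
            _ ≤ ∑ j ∈ J w, ((S j).filter fun x => x ≠ v ∧ G.parent x = u).card :=
                Finset.sum_le_sum fun j _ => hsub j
            _ ≤ ∑ j : Fin k, ((S j).filter fun x => x ≠ v ∧ G.parent x = u).card :=
                Finset.sum_le_sum_of_subset (Finset.subset_univ _)
            _ ≤ c u := h4 u
      have hmem : (∑ t : Fin (i w), (P w ((J w).equivFin.symm t : Fin k)).card)
          ∈ Mset G hall c w (i w) := ⟨_, hTOK, rfl⟩
      have : (∑ j : Fin k, (P w j).card)
          = ∑ t : Fin (i w), (P w ((J w).equivFin.symm t : Fin k)).card := by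
        rw [hsumJ fun j => (P w j).card]
        symm
        apply Finset.sum_subset (Finset.subset_univ _)
        intro j _ hj
        simp only [hJ, Finset.mem_filter, Finset.mem_univ, true_and] at hj
        rw [Finset.card_eq_zero, ← Finset.not_nonempty_iff_eq_empty]
        intro hne
        exact hj (hPw j hne)
      rw [this]
      exact le_csSup (Mset_bdd G hall c w (i w)) hmem
    · rw [if_neg hiw]
      have : ∀ j : Fin k, (P w j).card = 0 := by
        intro j
        rw [Finset.card_eq_zero, ← Finset.not_nonempty_iff_eq_empty]
        intro hne
        have hj : j ∈ J w := by
          simp only [hJ, Finset.mem_filter, Finset.mem_univ, true_and]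
          exact hPw j hne
        have : 1 ≤ i w := by
          simp only [hi]
          exact Finset.card_pos.mpr ⟨j, hj⟩
        exact hiw this
      simp [this]
  -- conclude
  have hval : (∑ w ∈ G.childSet v, if 1 ≤ i w then sSup (Mset G hall c w (i w)) else 0)
      ∈ {S | ∃ i : V → ℕ, (∀ w, i w ≤ k) ∧ (∑ w ∈ G.childSet v, i w) ≤ c v ∧
        S = ∑ w ∈ G.childSet v, if 1 ≤ i w then sSup (Mset G hall c w (i w)) else 0} :=
    ⟨i, hik, hcapv, rfl⟩
  have hbddI : BddAbove {S | ∃ i : V → ℕ, (∀ w, i w ≤ k) ∧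
      (∑ w ∈ G.childSet v, i w) ≤ c v ∧
      S = ∑ w ∈ G.childSet v, if 1 ≤ i w then sSup (Mset G hall c w (i w)) else 0} := by
    refine ⟨∑ w ∈ G.childSet v, k * Fintype.card V, ?_⟩
    rintro x ⟨i', hi'k, _, rfl⟩
    apply Finset.sum_le_sum
    intro w _
    by_cases h' : 1 ≤ i' w
    · rw [if_pos h']
      have hb : sSup (Mset G hall c w (i' w)) ≤ i' w * Fintype.card V := by
        apply csSup_le (Mset_nonempty G hall c w (i' w))
        rintro b ⟨S', _, rfl⟩
        calc (∑ j, (S' j).card) ≤ ∑ _j : Fin (i' w), Fintype.card V :=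
              Finset.sum_le_sum fun j _ => by
                simpa using Finset.card_le_card (Finset.subset_univ (S' j))
          _ = i' w * Fintype.card V := by simp [mul_comm]
      exact hb.trans (Nat.mul_le_mul_right _ (hi'k w))
    · rw [if_neg h']; exact Nat.zero_le _
  calc (∑ j, (S j).card) = ∑ j : Fin k, (1 + ∑ w ∈ G.childSet v, (P w j).card) :=
        Finset.sum_congr rfl fun j _ => hcard j
    _ = k + ∑ j : Fin k, ∑ w ∈ G.childSet v, (P w j).card := by
        rw [Finset.sum_add_distrib]; simp
    _ = k + ∑ w ∈ G.childSet v, ∑ j : Fin k, (P w j).card := by rw [Finset.sum_comm]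
    _ ≤ k + ∑ w ∈ G.childSet v, (if 1 ≤ i w then sSup (Mset G hall c w (i w)) else 0) := by
        exact Nat.add_le_add_left (Finset.sum_le_sum hchbd) k
    _ ≤ k + sSup _ := Nat.add_le_add_left (le_csSup hbddI hval) k


lemma sum_dite_fin' {k m : ℕ} (h : m ≤ k) (A : Fin m → Finset V) (f : Finset V → ℕ)
    (hf : f ∅ = 0) :
    (∑ j : Fin k, f (if hj : (j : ℕ) < m then A ⟨j, hj⟩ else ∅)) = ∑ t : Fin m, f (A t) := by
  have h1 : (∑ j : Fin k, f (if hj : (j : ℕ) < m then A ⟨j, hj⟩ else ∅))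
      = ∑ j : Fin k, if hj : (j : ℕ) < m then f (A ⟨j, hj⟩) else 0 := by
    refine Finset.sum_congr rfl fun j _ => ?_
    by_cases hj : (j : ℕ) < m
    · rw [dif_pos hj, dif_pos hj]
    · rw [dif_neg hj, dif_neg hj, hf]
  rw [h1, sum_dite_fin h (fun t => f (A t))]

lemma M_ge (c : V → ℕ) (hspan : G.verts = Finset.univ) (v : V) (k : ℕ) (hk : 1 ≤ k) :
    k + sSup {S | ∃ i : V → ℕ, (∀ w, i w ≤ k) ∧
      (∑ w ∈ G.childSet v, i w) ≤ c v ∧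
      S = ∑ w ∈ G.childSet v, if 1 ≤ i w then sSup (Mset G hall c w (i w)) else 0}
      ≤ sSup (Mset G hall c v k) := by
  classical
  set Inner : Set ℕ := {S | ∃ i : V → ℕ, (∀ w, i w ≤ k) ∧
      (∑ w ∈ G.childSet v, i w) ≤ c v ∧
      S = ∑ w ∈ G.childSet v, if 1 ≤ i w then sSup (Mset G hall c w (i w)) else 0} with hInner
  have hInonempty : Inner.Nonempty :=
    ⟨_, ⟨fun _ => 0, fun _ => Nat.zero_le _, by simp, rfl⟩⟩
  have hIbdd : BddAbove Inner := by
    refine ⟨∑ w ∈ G.childSet v, k * Fintype.card V, ?_⟩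
    rintro x ⟨i', hi'k, _, rfl⟩
    apply Finset.sum_le_sum
    intro w _
    by_cases h' : 1 ≤ i' w
    · rw [if_pos h']
      have hb : sSup (Mset G hall c w (i' w)) ≤ i' w * Fintype.card V := by
        apply csSup_le (Mset_nonempty G hall c w (i' w))
        rintro b ⟨S', _, rfl⟩
        calc (∑ j, (S' j).card) ≤ ∑ _j : Fin (i' w), Fintype.card V :=
              Finset.sum_le_sum fun j _ => by
                simpa using Finset.card_le_card (Finset.subset_univ (S' j))
          _ = i' w * Fintype.card V := by simp [mul_comm]
      exact hb.trans (Nat.mul_le_mul_right _ (hi'k w))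
    · rw [if_neg h']; exact Nat.zero_le _
  obtain ⟨i, hik, hicv, hival⟩ := Nat.sSup_mem hInonempty hIbdd
  -- choose optimal families at the children
  have hch : ∀ w : V, ∃ Sw : Fin (i w) → Finset V,
      w ∈ G.childSet v → 1 ≤ i w → famOK G hall c w Sw ∧
        sSup (Mset G hall c w (i w)) = ∑ t, (Sw t).card := by
    intro w
    by_cases h : w ∈ G.childSet v ∧ 1 ≤ i w
    · obtain ⟨Sw, hOK, hsum⟩ :=
        Nat.sSup_mem (Mset_nonempty G hall c w (i w)) (Mset_bdd G hall c w (i w))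
      exact ⟨Sw, fun _ _ => ⟨hOK, hsum⟩⟩
    · exact ⟨fun _ => {w}, fun ha hb => absurd ⟨ha, hb⟩ h⟩
  choose F hF using hch
  set Q : V → Fin k → Finset V :=
    fun w j => if hj : (j : ℕ) < i w then F w ⟨j, hj⟩ else ∅ with hQ
  set S : Fin k → Finset V :=
    fun j => insert v ((G.childSet v).biUnion fun w => Q w j) with hS
  have hdepw : ∀ w ∈ G.childSet v, dep G hall w = dep G hall v + 1 := by
    intro w hw
    rw [mem_childSet G hspan] at hw
    exact (isDesc_child G hall hw.1 hw.2).2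
  have hxnev : ∀ w ∈ G.childSet v, ∀ x, isDesc G hall w x → x ≠ v := by
    intro w hw x hx
    have := isDesc_dep_le G hall hx
    have := hdepw w hw
    intro hxe; subst hxe; omega
  have hQmem : ∀ w ∈ G.childSet v, ∀ (j : Fin k) (x : V), x ∈ Q w j →
      ∃ hj : (j : ℕ) < i w, 1 ≤ i w ∧ x ∈ F w ⟨j, hj⟩ := by
    intro w hw j x hx
    simp only [hQ] at hx
    by_cases hj : (j : ℕ) < i w
    · rw [dif_pos hj] at hx
      exact ⟨hj, by omega, hx⟩
    · rw [dif_neg hj] at hx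
      exact absurd hx (Finset.notMem_empty x)
  have hQdesc : ∀ w ∈ G.childSet v, ∀ (j : Fin k), ∀ x ∈ Q w j, isDesc G hall w x := by
    intro w hw j x hx
    obtain ⟨hj, h1iw, hxF⟩ := hQmem w hw j x hx
    exact (hF w hw h1iw).1.2.1 ⟨j, hj⟩ x hxF
  have hSmem : ∀ (j : Fin k) (x : V), x ∈ S j ↔ x = v ∨ ∃ w ∈ G.childSet v, x ∈ Q w j := by
    intro j x
    simp only [hS, Finset.mem_insert, Finset.mem_biUnion]
  -- famOK of the assembled family
  have hOK : famOK G hall c v S := by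
    refine ⟨fun j => Finset.mem_insert_self v _, ?_, ?_, ?_⟩
    · intro j x hx
      rcases (hSmem j x).mp hx with rfl | ⟨w, hw, hxQ⟩
      · exact isDesc_refl G hall x
      · have hcw := (mem_childSet G hspan).mp hw
        exact isDesc_trans G hall (isDesc_child G hall hcw.1 hcw.2).1 (hQdesc w hw j x hxQ)
    · intro j x hx hxv
      rcases (hSmem j x).mp hx with rfl | ⟨w, hw, hxQ⟩
      · exact absurd rfl hxv
      · obtain ⟨hj, h1iw, hxF⟩ := hQmem w hw j x hxQ
        by_cases hxw : x = w
        · subst hxw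
          rw [((mem_childSet G hspan).mp hw).2]
          exact Finset.mem_insert_self v _
        · have hpx : G.parent x ∈ F w ⟨j, hj⟩ := (hF w hw h1iw).1.2.2.1 ⟨j, hj⟩ x hxF hxw
          refine (hSmem j (G.parent x)).mpr (Or.inr ⟨w, hw, ?_⟩)
          simp only [hQ]
          rw [dif_pos hj]
          exact hpx
    · -- capacities
      intro u
      have hfb : ∀ j : Fin k, ((S j).filter fun x => x ≠ v ∧ G.parent x = u)
          = (G.childSet v).biUnion fun w =>
              ((Q w j).filter fun x => x ≠ v ∧ G.parent x = u) := by
        intro j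
        simp only [hS]
        rw [Finset.filter_insert, if_neg (by simp), Finset.filter_biUnion]
      have hQdisj : ∀ (j : Fin k), ∀ w ∈ G.childSet v, ∀ w' ∈ G.childSet v, w ≠ w' →
          Disjoint ((Q w j).filter fun x => x ≠ v ∧ G.parent x = u)
            ((Q w' j).filter fun x => x ≠ v ∧ G.parent x = u) := by
        intro j w hw w' hw' hne
        rw [Finset.disjoint_left]
        intro x hx hx'
        simp only [Finset.mem_filter] at hx hx'
        exact hne (isDesc_unique G hall (hQdesc w hw j x hx.1) (hQdesc w' hw' j x hx'.1)
          (by rw [hdepw w hw, hdepw w' hw']))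
      by_cases hu : u = v
      · subst hu
        have hfj : ∀ j : Fin k, ((S j).filter fun x => x ≠ u ∧ G.parent x = u)
            = (G.childSet u).filter fun w => (j : ℕ) < i w := by
          intro j
          ext x
          simp only [Finset.mem_filter]
          constructor
          · rintro ⟨hxS, hxu, hpxu⟩
            rcases (hSmem j x).mp hxS with rfl | ⟨w, hw, hxQ⟩
            · exact absurd rfl hxu
            · obtain ⟨hj, h1iw, hxF⟩ := hQmem w hw j x hxQ
              have hdx := hQdesc w hw j x hxQ
              have hxw : x = w := by
                by_contra hxw
                have hnd := (isDesc_parent G hall hdx hxw).2.1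
                rw [hpxu] at hnd
                have := isDesc_dep_le G hall hnd
                have := hdepw w hw
                omega
              subst hxw
              exact ⟨hw, hj⟩
          · rintro ⟨hw, hj⟩
            have h1iw : 1 ≤ i x := by omega
            have hroot : x ∈ Q x j := by
              simp only [hQ]
              rw [dif_pos hj]
              exact (hF x hw h1iw).1.1 ⟨j, hj⟩
            refine ⟨(hSmem j x).mpr (Or.inr ⟨x, hw, hroot⟩), ?_,
              ((mem_childSet G hspan).mp hw).2⟩
            have := hdepw x hw
            intro hxe; subst hxe; omega
        calc (∑ j : Fin k, ((S j).filter fun x => x ≠ u ∧ G.parent x = u).card)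
            = ∑ j : Fin k, ((G.childSet u).filter fun w => (j : ℕ) < i w).card :=
              Finset.sum_congr rfl fun j _ => by rw [hfj j]
          _ = ∑ j : Fin k, ∑ w ∈ G.childSet u, if (j : ℕ) < i w then 1 else 0 :=
              Finset.sum_congr rfl fun j _ => Finset.card_filter _ _
          _ = ∑ w ∈ G.childSet u, ∑ j : Fin k, if (j : ℕ) < i w then 1 else 0 :=
              Finset.sum_comm
          _ = ∑ w ∈ G.childSet u, i w := by
              refine Finset.sum_congr rfl fun w _ => ?_
              rw [← Finset.card_filter]
              exact card_filter_fin_lt (hik w)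
          _ ≤ c u := hicv
      · -- u ≠ v
        have hpred : ∀ w ∈ G.childSet v, ∀ j : Fin k,
            ((Q w j).filter fun x => x ≠ v ∧ G.parent x = u)
              = (Q w j).filter fun x => x ≠ w ∧ G.parent x = u := by
          intro w hw j
          refine Finset.filter_congr fun x hx => ?_
          have hdx := hQdesc w hw j x hx
          have hxv : x ≠ v := hxnev w hw x hdx
          by_cases hxw : x = w
          · subst hxw
            have hpxv := ((mem_childSet G hspan).mp hw).2
            simp [hxv, hpxv, Ne.symm hu]
          · simp [hxv, hxw]
        have hcnt : ∀ j : Fin k, ((S j).filter fun x => x ≠ v ∧ G.parent x = u).card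
            = ∑ w ∈ G.childSet v, ((Q w j).filter fun x => x ≠ w ∧ G.parent x = u).card := by
          intro j
          rw [hfb j, Finset.card_biUnion (hQdisj j)]
          exact Finset.sum_congr rfl fun w hw => by rw [hpred w hw j]
        have hQsum : ∀ w ∈ G.childSet v,
            (∑ j : Fin k, ((Q w j).filter fun x => x ≠ w ∧ G.parent x = u).card)
              = ∑ t : Fin (i w), ((F w t).filter fun x => x ≠ w ∧ G.parent x = u).card := by
          intro w hw
          exact sum_dite_fin' (hik w) (F w)
            (fun s => (s.filter fun x => x ≠ w ∧ G.parent x = u).card) (by simp)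
        by_cases hex : ∃ w0 ∈ G.childSet v, isDesc G hall w0 u
        · obtain ⟨w0, hw0, hw0u⟩ := hex
          have hzero : ∀ w ∈ G.childSet v, w ≠ w0 → ∀ j : Fin k,
              ((Q w j).filter fun x => x ≠ w ∧ G.parent x = u) = ∅ := by
            intro w hw hne j
            rw [Finset.filter_eq_empty_iff]
            rintro x hx ⟨hxw, hpxu⟩
            have hdx := hQdesc w hw j x hx
            have hnd := (isDesc_parent G hall hdx hxw).2.1
            rw [hpxu] at hnd
            exact hne (isDesc_unique G hall hnd hw0u (by rw [hdepw w hw, hdepw w0 hw0]))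
          calc (∑ j : Fin k, ((S j).filter fun x => x ≠ v ∧ G.parent x = u).card)
              = ∑ j : Fin k, ∑ w ∈ G.childSet v,
                  ((Q w j).filter fun x => x ≠ w ∧ G.parent x = u).card :=
                Finset.sum_congr rfl fun j _ => hcnt j
            _ = ∑ w ∈ G.childSet v, ∑ j : Fin k,
                  ((Q w j).filter fun x => x ≠ w ∧ G.parent x = u).card := Finset.sum_comm
            _ = ∑ j : Fin k, ((Q w0 j).filter fun x => x ≠ w0 ∧ G.parent x = u).card := by
                refine Finset.sum_eq_single_of_mem w0 hw0 fun w hw hne => ?_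
                refine Finset.sum_eq_zero fun j _ => ?_
                rw [hzero w hw hne j, Finset.card_empty]
            _ = ∑ t : Fin (i w0), ((F w0 t).filter fun x => x ≠ w0 ∧ G.parent x = u).card :=
                hQsum w0 hw0
            _ ≤ c u := by
                by_cases h1 : 1 ≤ i w0
                · exact (hF w0 hw0 h1).1.2.2.2 u
                · have h0 : i w0 = 0 := by omega
                  haveI : IsEmpty (Fin (i w0)) := by rw [h0]; infer_instance
                  rw [Finset.univ_eq_empty, Finset.sum_empty]
                  exact Nat.zero_le _
        · have hzero : ∀ w ∈ G.childSet v, ∀ j : Fin k,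
              ((Q w j).filter fun x => x ≠ w ∧ G.parent x = u) = ∅ := by
            intro w hw j
            rw [Finset.filter_eq_empty_iff]
            rintro x hx ⟨hxw, hpxu⟩
            have hdx := hQdesc w hw j x hx
            have hnd := (isDesc_parent G hall hdx hxw).2.1
            rw [hpxu] at hnd
            exact hex ⟨w, hw, hnd⟩
          calc (∑ j : Fin k, ((S j).filter fun x => x ≠ v ∧ G.parent x = u).card)
              = ∑ j : Fin k, ∑ w ∈ G.childSet v,
                  ((Q w j).filter fun x => x ≠ w ∧ G.parent x = u).card :=
                Finset.sum_congr rfl fun j _ => hcnt j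
            _ = 0 := by
                refine Finset.sum_eq_zero fun j _ => Finset.sum_eq_zero fun w hw => ?_
                rw [hzero w hw j, Finset.card_empty]
            _ ≤ c u := Nat.zero_le _
  -- total count
  have hvnot : ∀ j : Fin k, v ∉ (G.childSet v).biUnion fun w => Q w j := by
    intro j hv
    simp only [Finset.mem_biUnion] at hv
    obtain ⟨w, hw, hvQ⟩ := hv
    exact (hxnev w hw v (hQdesc w hw j v hvQ)) rfl
  have hQdisj' : ∀ (j : Fin k), ∀ w ∈ G.childSet v, ∀ w' ∈ G.childSet v, w ≠ w' →
      Disjoint (Q w j) (Q w' j) := by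
    intro j w hw w' hw' hne
    rw [Finset.disjoint_left]
    intro x hx hx'
    exact hne (isDesc_unique G hall (hQdesc w hw j x hx) (hQdesc w' hw' j x hx')
      (by rw [hdepw w hw, hdepw w' hw']))
  have hScard : ∀ j : Fin k, (S j).card = 1 + ∑ w ∈ G.childSet v, (Q w j).card := by
    intro j
    simp only [hS]
    rw [Finset.card_insert_of_notMem (hvnot j), Finset.card_biUnion (hQdisj' j)]
    omega
  have htotal : (∑ j, (S j).card)
      = k + ∑ w ∈ G.childSet v, if 1 ≤ i w then sSup (Mset G hall c w (i w)) else 0 := by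
    calc (∑ j, (S j).card)
        = ∑ j : Fin k, (1 + ∑ w ∈ G.childSet v, (Q w j).card) :=
          Finset.sum_congr rfl fun j _ => hScard j
      _ = k + ∑ j : Fin k, ∑ w ∈ G.childSet v, (Q w j).card := by
          rw [Finset.sum_add_distrib]; simp
      _ = k + ∑ w ∈ G.childSet v, ∑ j : Fin k, (Q w j).card := by rw [Finset.sum_comm]
      _ = k + ∑ w ∈ G.childSet v, if 1 ≤ i w then sSup (Mset G hall c w (i w)) else 0 := by
          congr 1
          refine Finset.sum_congr rfl fun w hw => ?_
          have hsd : (∑ j : Fin k, (Q w j).card) = ∑ t : Fin (i w), (F w t).card :=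
            sum_dite_fin' (hik w) (F w) Finset.card rfl
          rw [hsd]
          by_cases h1 : 1 ≤ i w
          · rw [if_pos h1, (hF w hw h1).2]
          · rw [if_neg h1]
            have h0 : i w = 0 := by omega
            haveI : IsEmpty (Fin (i w)) := by rw [h0]; infer_instance
            rw [Finset.univ_eq_empty, Finset.sum_empty]
  have hmem : (∑ j, (S j).card) ∈ Mset G hall c v k := ⟨S, hOK, rfl⟩
  rw [← hival] at htotal
  rw [← htotal]
  exact le_csSup (Mset_bdd G hall c v k) hmem


lemma M_rec (c : V → ℕ) (hspan : G.verts = Finset.univ) (v : V) (k : ℕ) (hk : 1 ≤ k) :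
    sSup (Mset G hall c v k) = k + sSup {S | ∃ i : V → ℕ, (∀ w, i w ≤ k) ∧
      (∑ w ∈ G.childSet v, i w) ≤ c v ∧
      S = ∑ w ∈ G.childSet v, if 1 ≤ i w then sSup (Mset G hall c w (i w)) else 0} :=
  le_antisymm (M_le G hall c hspan v k hk) (M_ge G hall c hspan v k hk)

end TreeDP

open TreeDP

/-- Correctness of the tree dynamic program: if `g` satisfies the leaf and internal
recurrences, then `g r K` equals the optimal total number of spanned vertices over all
bounded rooted-tree packings of `K` trees in the tree `G`. -/
theorem tree_dp_correct {V : Type} [DecidableEq V] [Fintype V] {r : V} (G : RTree V r)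
    (c : V → ℕ) (hspan : G.verts = Finset.univ) (K : ℕ) (hK : 1 ≤ K)
    (g : V → ℕ → ℕ)
    (hleaf : ∀ v ∈ G.verts, G.children v = 0 → ∀ k, 1 ≤ k → g v k = k)
    (hint : ∀ u ∈ G.verts, 0 < G.children u → ∀ k, 1 ≤ k →
      g u k = k + sSup {S | ∃ i : V → ℕ, (∀ w, i w ≤ k) ∧
        (∑ w ∈ G.childSet u, i w) ≤ c u ∧
        S = ∑ w ∈ G.childSet u, if 1 ≤ i w then g w (i w) else 0}) :
    g r K = sSup {S | ∃ T : Fin K → RTree V r, subPacking G c r T ∧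
      S = ∑ k, (T k).verts.card} := by
  have hall : ∀ v : V, ∃ n : ℕ, G.parent^[n] v = r := fun v => G.reach v (by simp [hspan])
  have main : ∀ d : ℕ, ∀ v : V, Fintype.card V - dep G hall v ≤ d → ∀ k, 1 ≤ k →
      g v k = sSup (Mset G hall c v k) := by
    intro d
    induction d with
    | zero =>
      intro v hv
      have := dep_lt_card G hall v
      omega
    | succ d ih =>
      intro v hv k hk
      have hcv : Fintype.card V - dep G hall v ≥ 1 := by
        have := dep_lt_card G hall v; omega
      have hchild : ∀ w ∈ G.childSet v, ∀ j, 1 ≤ j → g w j = sSup (Mset G hall c w j) := by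
        intro w hw j hj
        rw [mem_childSet G hspan] at hw
        have hd := (isDesc_child G hall hw.1 hw.2).2
        exact ih w (by omega) j hj
      by_cases hleafv : G.children v = 0
      · rw [hleaf v (by simp [hspan]) hleafv k hk, M_rec G hall c hspan v k hk]
        have hemp : G.childSet v = ∅ := Finset.card_eq_zero.mp hleafv
        have : {S | ∃ i : V → ℕ, (∀ w, i w ≤ k) ∧
            (∑ w ∈ G.childSet v, i w) ≤ c v ∧
            S = ∑ w ∈ G.childSet v, if 1 ≤ i w then sSup (Mset G hall c w (i w)) else 0}
            = {0} := by
          ext s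
          simp only [hemp, Finset.sum_empty, Set.mem_setOf_eq, Set.mem_singleton_iff]
          constructor
          · rintro ⟨i, _, _, rfl⟩; rfl
          · rintro rfl; exact ⟨fun _ => 0, fun w => Nat.zero_le _, Nat.zero_le _, rfl⟩
        rw [this]
        simp
      · rw [hint v (by simp [hspan]) (Nat.pos_of_ne_zero hleafv) k hk,
          M_rec G hall c hspan v k hk]
        congr 2
        ext s
        constructor <;> rintro ⟨i, hle, hc, rfl⟩ <;>
          refine ⟨i, hle, hc, Finset.sum_congr rfl fun w hw => ?_⟩ <;>
          by_cases h1 : 1 ≤ i w <;>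
          simp [h1, hchild w hw (i w)]
  rw [main (Fintype.card V) r (by omega) K hK, pack_eq G hall c hspan K]
end
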